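/- arXiv:2411.02226 — 5 statements merged into one kernel-verified Lean document; each statement's English description precedes it below -/
import Mathlib

section
/- Let E be an entire function satisfying |E(z̄)| ≤ |E(z)| for all z in the upper half-plane, and let f be entire with f/E and f^#/E bounded by 1 in modulus on the real line (and f/E, f^#/E bounded analytic in the upper half-plane). Then for every complex λ with |λ| ≥ 1 the function f − λE satisfies |(f − λE)(z̄)| ≤ |(f − λE)(z)| for all z in the upper half-plane. -/
open Complex

noncomputable section

/-- `f^#(z) = conj (f (conj z))`. -/
def fsharp (f : ℂ → ℂ) : ℂ → ℂ := fun z => (starRingEnd ℂ) (f ((starRingEnd ℂ) z))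

open Filter Set Metric Topology

/-- Local factorization: if `|g| ≤ M|E|` along a nontrivial filter at `z₀`, then `E` divides `g`
locally at `z₀`. -/
lemma exists_local_factor {g E : ℂ → ℂ} (hg : Differentiable ℂ g) (hE : Differentiable ℂ E)
    (hEnz : ∃ w, E w ≠ 0) {z₀ : ℂ} {s : Set ℂ} (hne : (𝓝[s] z₀).NeBot) (hs : z₀ ∉ s)
    {M : ℝ} (hbd : ∀ᶠ z in 𝓝[s] z₀, ‖g z‖ ≤ M * ‖E z‖) :
    ∃ h : ℂ → ℂ, AnalyticAt ℂ h z₀ ∧ ∀ᶠ z in 𝓝 z₀, g z = E z * h z := by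
  have hEa := hE.analyticAt z₀
  have hga := hg.analyticAt z₀
  have hEo : analyticOrderAt E z₀ ≠ ⊤ := by
    intro h
    rw [analyticOrderAt_eq_top] at h
    have hana : AnalyticOnNhd ℂ E univ := fun z _ => hE.analyticAt z
    have hzero := hana.eqOn_zero_of_preconnected_of_eventuallyEq_zero isPreconnected_univ
      (mem_univ z₀) (by filter_upwards [h] with z hz using hz)
    obtain ⟨w, hw⟩ := hEnz
    exact hw (hzero (mem_univ w))
  obtain ⟨m, hm⟩ : ∃ m : ℕ, analyticOrderAt E z₀ = (m : ℕ∞) := by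
    cases h : analyticOrderAt E z₀ with
    | top => exact absurd h hEo
    | coe m => exact ⟨m, rfl⟩
  obtain ⟨ψ, hψa, hψ0, hψe⟩ := (hEa.analyticOrderAt_eq_natCast).1 hm
  by_cases hgo : analyticOrderAt g z₀ = ⊤
  · refine ⟨0, analyticAt_const, ?_⟩
    filter_upwards [analyticOrderAt_eq_top.1 hgo] with z hz
    simp [hz]
  obtain ⟨k, hk⟩ : ∃ k : ℕ, analyticOrderAt g z₀ = (k : ℕ∞) := by
    cases h : analyticOrderAt g z₀ with
    | top => exact absurd h hgo
    | coe k => exact ⟨k, rfl⟩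
  obtain ⟨φ, hφa, hφ0, hφe⟩ := (hga.analyticOrderAt_eq_natCast).1 hk
  have hl : 𝓝[s] z₀ ≤ 𝓝[≠] z₀ := by
    refine nhdsWithin_mono _ ?_
    intro z hz
    rintro rfl
    exact hs hz
  have hkm : m ≤ k := by
    by_contra hlt
    push_neg at hlt
    have hadd : k + (m - k) = m := Nat.add_sub_cancel' hlt.le
    have hev : ∀ᶠ z in 𝓝[s] z₀,
        ‖φ z‖ ≤ M * (‖z - z₀‖ ^ (m - k) * ‖ψ z‖) := by
      filter_upwards [hbd, hψe.filter_mono nhdsWithin_le_nhds,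
        hφe.filter_mono nhdsWithin_le_nhds, hl self_mem_nhdsWithin] with z h1 h2 h3 hz
      have hzne : z ≠ z₀ := hz
      have hA : (0 : ℝ) < ‖z - z₀‖ ^ k := by
        apply pow_pos
        simpa [sub_eq_zero] using (norm_pos_iff.2 (sub_ne_zero.2 hzne))
      rw [h2, h3] at h1
      simp only [smul_eq_mul, norm_mul, norm_pow] at h1
      rw [← hadd, pow_add] at h1
      have h1' : ‖z - z₀‖ ^ k * ‖φ z‖
          ≤ ‖z - z₀‖ ^ k * (M * (‖z - z₀‖ ^ (m - k) * ‖ψ z‖)) := by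
        nlinarith [h1, hA]
      exact le_of_mul_le_mul_left h1' hA
    have htend : Tendsto (fun z => M * (‖z - z₀‖ ^ (m - k) * ‖ψ z‖))
        (𝓝[s] z₀) (𝓝 0) := by
      have hc : ContinuousAt (fun z => M * (‖z - z₀‖ ^ (m - k) * ‖ψ z‖)) z₀ := by
        exact continuousAt_const.mul
          (((continuous_norm.comp (continuous_id.sub continuous_const)).continuousAt.pow _).mul
            (continuous_norm.continuousAt.comp hψa.continuousAt))
      have h0 : M * (‖z₀ - z₀‖ ^ (m - k) * ‖ψ z₀‖) = 0 := by
        have : m - k ≠ 0 := Nat.sub_ne_zero_of_lt hlt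
        simp [this, zero_pow]
      exact h0 ▸ hc.tendsto.mono_left nhdsWithin_le_nhds
    have htend2 : Tendsto (fun z => ‖φ z‖) (𝓝[s] z₀) (𝓝 (‖φ z₀‖)) :=
      (continuous_norm.continuousAt.comp hφa.continuousAt).tendsto.mono_left nhdsWithin_le_nhds
    have := le_of_tendsto_of_tendsto htend2 htend hev
    exact absurd this (not_le.2 (norm_pos_iff.2 hφ0))
  -- construct the factor
  refine ⟨fun z => (z - z₀) ^ (k - m) * (φ z * (ψ z)⁻¹),
    (((analyticAt_id.sub analyticAt_const).pow _).mul (hφa.mul (hψa.inv hψ0))), ?_⟩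
  filter_upwards [hφe, hψe, hψa.continuousAt.eventually_ne hψ0] with z h1 h2 h3
  rw [h1, h2]
  have : (z - z₀) ^ m * (z - z₀) ^ (k - m) = (z - z₀) ^ k := by
    rw [← pow_add, Nat.add_sub_cancel' hkm]
  field_simp
  rw [← this]
  ring


def Qfun (g E : ℂ → ℂ) : ℂ → ℂ := fun z =>
  if E z = 0 then limUnder (𝓝[≠] z) (fun w => g w / E w) else g z / E z

lemma eventually_ne_zero_punctured {E : ℂ → ℂ} (hE : Differentiable ℂ E)
    (hEnz : ∃ w, E w ≠ 0) (z₀ : ℂ) : ∀ᶠ z in 𝓝[≠] z₀, E z ≠ 0 := by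
  have hEa := hE.analyticAt z₀
  rcases hEa.eventually_eq_zero_or_eventually_ne_zero with h | h
  · exfalso
    have hana : AnalyticOnNhd ℂ E univ := fun z _ => hE.analyticAt z
    have hzero := hana.eqOn_zero_of_preconnected_of_eventuallyEq_zero isPreconnected_univ
      (mem_univ z₀) (by filter_upwards [h] with z hz using hz)
    obtain ⟨w, hw⟩ := hEnz
    exact hw (hzero (mem_univ w))
  · exact h

lemma key_at_zero {g E : ℂ → ℂ} (hg : Differentiable ℂ g) (hE : Differentiable ℂ E)
    (hEnz : ∃ w, E w ≠ 0) {z₀ : ℂ} (hE0 : E z₀ = 0)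
    {s : Set ℂ} (hne : (𝓝[s] z₀).NeBot) (hs : z₀ ∉ s)
    {b : ℝ} (hb0 : 0 ≤ b) (hsb : ∀ z ∈ s, E z ≠ 0 → ‖g z / E z‖ ≤ b) :
    DifferentiableAt ℂ (Qfun g E) z₀ ∧ ‖Qfun g E z₀‖ ≤ b := by
  have hl : 𝓝[s] z₀ ≤ 𝓝[≠] z₀ := by
    refine nhdsWithin_mono _ ?_
    intro z hz
    rintro rfl
    exact hs hz
  have hEev : ∀ᶠ z in 𝓝[≠] z₀, E z ≠ 0 := eventually_ne_zero_punctured hE hEnz z₀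
  have hbd : ∀ᶠ z in 𝓝[s] z₀, ‖g z‖ ≤ b * ‖E z‖ := by
    filter_upwards [hEev.filter_mono hl, self_mem_nhdsWithin] with z h1 h2
    have := hsb z h2 h1
    rw [norm_div, div_le_iff₀ (norm_pos_iff.2 h1)] at this
    linarith
  obtain ⟨h, hha, hhe⟩ := exists_local_factor hg hE hEnz hne hs hbd
  -- choose a ball where everything is good
  have hcomb : ∀ᶠ z in 𝓝[≠] z₀,
      E z ≠ 0 ∧ ‖h z‖ ≤ ‖h z₀‖ + 1 ∧ g z = E z * h z := by
    have hcont : ∀ᶠ z in 𝓝 z₀, ‖h z‖ ≤ ‖h z₀‖ + 1 := by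
      have : ContinuousAt (fun z => ‖h z‖) z₀ :=
        continuous_norm.continuousAt.comp hha.continuousAt
      exact this.eventually_le_const (by linarith)
    filter_upwards [hEev, hcont.filter_mono nhdsWithin_le_nhds,
      hhe.filter_mono nhdsWithin_le_nhds] with z h1 h2 h3
    exact ⟨h1, h2, h3⟩
  rw [eventually_nhdsWithin_iff] at hcomb
  obtain ⟨r, hr0, hball⟩ := Metric.eventually_nhds_iff_ball.1 hcomb
  set c₀ := limUnder (𝓝[≠] z₀) (fun w => g w / E w) with hc₀
  set U := Function.update (fun w => g w / E w) z₀ c₀ with hU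
  have hprop : ∀ z ∈ ball z₀ r, z ≠ z₀ →
      E z ≠ 0 ∧ ‖h z‖ ≤ ‖h z₀‖ + 1 ∧ g z = E z * h z :=
    fun z hz hzne => hball z hz hzne
  have hUdiff : DifferentiableOn ℂ U (ball z₀ r) := by
    refine Complex.differentiableOn_update_limUnder_of_bddAbove (ball_mem_nhds z₀ hr0) ?_ ?_
    · intro z hz
      exact ((hg z).div (hE z) (hprop z hz.1 hz.2).1).differentiableWithinAt
    · refine ⟨‖h z₀‖ + 1, ?_⟩
      rintro y ⟨z, ⟨hzb, hzne⟩, rfl⟩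
      obtain ⟨hE1, hh1, hg1⟩ := hprop z hzb hzne
      have : g z / E z = h z := by rw [hg1]; field_simp
      simp only [Function.comp_apply, this]
      exact hh1
  have hQeq : Set.EqOn (Qfun g E) U (ball z₀ r) := by
    intro z hz
    by_cases hzz : z = z₀
    · subst hzz
      simp [Qfun, hE0, hU, hc₀]
    · have hEz := (hprop z hz hzz).1
      simp [Qfun, hEz, hU, Function.update_of_ne hzz]
  have hQdiff : DifferentiableAt ℂ (Qfun g E) z₀ := by
    have hev : Qfun g E =ᶠ[𝓝 z₀] U := hQeq.eventuallyEq_of_mem (ball_mem_nhds z₀ hr0)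
    exact hev.differentiableAt_iff.2 (hUdiff.differentiableAt (ball_mem_nhds z₀ hr0))
  refine ⟨hQdiff, ?_⟩
  -- bound via continuity and approach within s
  have hQt : Tendsto (fun z => ‖Qfun g E z‖) (𝓝[s] z₀)
      (𝓝 (‖Qfun g E z₀‖)) :=
    ((continuous_norm.continuousAt.comp hQdiff.continuousAt).tendsto).mono_left
      nhdsWithin_le_nhds
  refine le_of_tendsto hQt ?_
  have hballev : ∀ᶠ z in 𝓝[s] z₀, z ∈ ball z₀ r :=
    eventually_nhdsWithin_of_eventually_nhds (ball_mem_nhds z₀ hr0)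
  filter_upwards [hballev, self_mem_nhdsWithin, hEev.filter_mono hl] with z h1 h2 h3
  have : Qfun g E z = g z / E z := by simp [Qfun, h3]
  rw [this]
  exact hsb z h2 h3

lemma lemA {g E : ℂ → ℂ} (hg : Differentiable ℂ g) (hE : Differentiable ℂ E)
    (hb : ∀ x : ℝ, ‖g x‖ ≤ ‖E x‖)
    (hC : ∃ C : ℝ, ∀ z : ℂ, 0 < z.im → ‖g z‖ ≤ C * ‖E z‖) :
    ∀ z : ℂ, 0 < z.im → ‖g z‖ ≤ ‖E z‖ := by
  obtain ⟨C, hC⟩ := hC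
  intro z hz
  by_cases hEz : E z = 0
  · have := hC z hz
    rw [hEz] at this ⊢
    simpa using this
  by_cases hEnz : ∀ w, E w = 0
  · exact absurd (hEnz z) hEz
  push_neg at hEnz
  set M : ℝ := max C 1 with hM
  have hM1 : (1:ℝ) ≤ M := le_max_right _ _
  have hM0 : (0:ℝ) ≤ M := le_trans zero_le_one hM1
  -- global bound on the closed upper half-plane
  have hMbound : ∀ w : ℂ, 0 ≤ w.im → ‖g w‖ ≤ M * ‖E w‖ := by
    intro w hw
    rcases lt_or_eq_of_le hw with h | h
    · exact le_trans (hC w h) (mul_le_mul_of_nonneg_right (le_max_left _ _) (norm_nonneg _))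
    · have hwr : ((w.re : ℝ) : ℂ) = w := Complex.ext (by simp) (by simp [← h])
      calc ‖g w‖ = ‖g ((w.re : ℝ) : ℂ)‖ := by rw [hwr]
        _ ≤ ‖E ((w.re : ℝ) : ℂ)‖ := hb w.re
        _ = ‖E w‖ := by rw [hwr]
        _ ≤ M * ‖E w‖ := le_mul_of_one_le_left (norm_nonneg _) hM1
  -- the key pointwise claim
  have key : ∀ w : ℂ, 0 ≤ w.im → DifferentiableAt ℂ (Qfun g E) w ∧
      ‖Qfun g E w‖ ≤ M ∧ (w.im = 0 → ‖Qfun g E w‖ ≤ 1) := by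
    intro w hw
    by_cases hEw : E w = 0
    · rcases lt_or_eq_of_le hw with him | him
      · -- interior zero
        set s : Set ℂ := {u : ℂ | 0 < u.im} ∩ {w}ᶜ with hsdef
        have hmem : {u : ℂ | 0 < u.im} ∈ 𝓝[{w}ᶜ] w := by
          refine mem_nhdsWithin_of_mem_nhds ?_
          exact (isOpen_lt continuous_const Complex.continuous_im).mem_nhds him
        have hseq : 𝓝[s] w = 𝓝[≠] w := nhdsWithin_inter_of_mem hmem
        have hne : (𝓝[s] w).NeBot := by rw [hseq]; infer_instance
        have hs : w ∉ s := fun h => h.2 rfl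
        have hsb : ∀ u ∈ s, E u ≠ 0 → ‖g u / E u‖ ≤ M := by
          intro u hu hEu
          rw [norm_div, div_le_iff₀ (norm_pos_iff.2 hEu)]
          exact hMbound u hu.1.le
        obtain ⟨h1, h2⟩ := key_at_zero hg hE hEnz hEw hne hs hM0 hsb
        exact ⟨h1, h2, fun h0 => absurd h0 (by positivity)⟩
      · -- boundary (real) zero
        set s : Set ℂ := {u : ℂ | u.im = 0} ∩ {w}ᶜ with hsdef
        have hs : w ∉ s := fun h => h.2 rfl
        have htend : Tendsto (fun t : ℝ => (t : ℂ) + w) (𝓝[≠] (0:ℝ)) (𝓝[s] w) := by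
          rw [tendsto_nhdsWithin_iff]
          constructor
          · refine Tendsto.mono_left ?_ nhdsWithin_le_nhds
            exact (continuous_ofReal.add continuous_const).tendsto' 0 w (by simp)
          · filter_upwards [self_mem_nhdsWithin] with t ht
            refine ⟨by simp [← him], ?_⟩
            simp only [mem_compl_iff, mem_singleton_iff]
            intro hcon
            apply ht
            have : (t : ℂ) = 0 := by
              have := congrArg (fun u => u - w) hcon
              simpa using this
            exact_mod_cast this
        have hne : (𝓝[s] w).NeBot := htend.neBot
        have hsb : ∀ u ∈ s, E u ≠ 0 → ‖g u / E u‖ ≤ 1 := by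
          intro u hu hEu
          have hu1 : u.im = 0 := hu.1
          have hur : ((u.re : ℝ) : ℂ) = u := Complex.ext (by simp) (by simp [hu1])
          rw [norm_div, div_le_one (norm_pos_iff.2 hEu)]
          calc ‖g u‖ = ‖g ((u.re : ℝ) : ℂ)‖ := by rw [hur]
            _ ≤ ‖E ((u.re : ℝ) : ℂ)‖ := hb u.re
            _ = ‖E u‖ := by rw [hur]
        obtain ⟨h1, h2⟩ := key_at_zero hg hE hEnz hEw hne hs zero_le_one hsb
        exact ⟨h1, le_trans h2 hM1, fun _ => h2⟩
    · -- E w ≠ 0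
      have hEev : ∀ᶠ u in 𝓝 w, E u ≠ 0 := hE.continuous.continuousAt.eventually_ne hEw
      have hev : Qfun g E =ᶠ[𝓝 w] fun u => g u / E u := by
        filter_upwards [hEev] with u hu
        simp [Qfun, hu]
      have hQw : Qfun g E w = g w / E w := by simp [Qfun, hEw]
      refine ⟨hev.differentiableAt_iff.2 ((hg w).div (hE w) hEw), ?_, ?_⟩
      · rw [hQw, norm_div, div_le_iff₀ (norm_pos_iff.2 hEw)]
        exact hMbound w hw
      · intro h0
        have hur : ((w.re : ℝ) : ℂ) = w := Complex.ext (by simp) (by simp [h0])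
        rw [hQw, norm_div, div_le_one (norm_pos_iff.2 hEw)]
        calc ‖g w‖ = ‖g ((w.re : ℝ) : ℂ)‖ := by rw [hur]
          _ ≤ ‖E ((w.re : ℝ) : ℂ)‖ := hb w.re
          _ = ‖E w‖ := by rw [hur]
  -- Phragmen–Lindelöf on the right half-plane for Φ w = Q (w * I)
  set Φ : ℂ → ℂ := fun w => Qfun g E (w * I) with hΦ
  have him' : ∀ w : ℂ, 0 ≤ w.re → 0 ≤ (w * I).im := by intro w hw; simpa using hw
  have hd : DiffContOnCl ℂ Φ {w : ℂ | 0 < w.re} := by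
    constructor
    · intro w hw
      have : DifferentiableAt ℂ Φ w :=
        ((key (w * I) (him' w (le_of_lt hw))).1).comp w (differentiableAt_id.mul_const I)
      exact this.differentiableWithinAt
    · rw [closure_setOf_lt_re]
      intro w hw
      have : DifferentiableAt ℂ Φ w :=
        ((key (w * I) (him' w hw)).1).comp w (differentiableAt_id.mul_const I)
      exact this.continuousAt.continuousWithinAt
  have hexp : ∃ c < (2:ℝ), ∃ B, Φ =O[Bornology.cobounded ℂ ⊓ Filter.principal {w : ℂ | 0 < w.re}]
      fun w => Real.exp (B * ‖w‖ ^ c) := by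
    refine ⟨1, one_lt_two, 0, Asymptotics.IsBigO.of_bound M ?_⟩
    rw [eventually_inf_principal]
    refine Eventually.of_forall fun w hw => ?_
    have := (key (w * I) (him' w (le_of_lt hw))).2.1
    simp only [zero_mul, Real.exp_zero, norm_one, mul_one]
    exact this
  have hre : IsBoundedUnder (· ≤ ·) atTop fun x : ℝ => ‖Φ x‖ := by
    refine isBoundedUnder_of_eventually_le (a := M) ?_
    filter_upwards [eventually_ge_atTop (0:ℝ)] with x hx
    have : (0:ℝ) ≤ ((x:ℂ) * I).im := by simpa using hx
    simpa using (key ((x:ℂ) * I) this).2.1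
  have himbd : ∀ x : ℝ, ‖Φ ((x:ℂ) * I)‖ ≤ 1 := by
    intro x
    have hxx : (x:ℂ) * I * I = ((-x : ℝ) : ℂ) := by
      rw [mul_assoc, I_mul_I]
      push_cast
      ring
    have h0 : (((-x : ℝ) : ℂ)).im = 0 := by simp
    have := (key (((-x:ℝ)) : ℂ) (by simp [h0])).2.2 h0
    simpa [hΦ, hxx] using this
  have hPL : ∀ w : ℂ, 0 ≤ w.re → ‖Φ w‖ ≤ 1 := fun w hw =>
    PhragmenLindelof.right_half_plane_of_bounded_on_real hd hexp hre himbd hw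
  -- conclude
  have hzw : (z * (-I)) * I = z := by
    rw [mul_assoc]
    simp
  have hre' : (0:ℝ) ≤ (z * (-I)).re := by
    simp [mul_re]
    linarith
  have hfin := hPL (z * (-I)) hre'
  rw [hΦ] at hfin
  simp only [hzw] at hfin
  have hQz : Qfun g E z = g z / E z := by simp [Qfun, hEz]
  rw [hQz, norm_div, div_le_one (norm_pos_iff.2 hEz)] at hfin
  exact hfin

lemma fsharp_differentiable {f : ℂ → ℂ} (hf : Differentiable ℂ f) :
    Differentiable ℂ (fsharp f) := by
  intro z
  have hd := (hf ((starRingEnd ℂ) z)).hasDerivAt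
  set d := deriv f ((starRingEnd ℂ) z) with hdd
  have hconj : Tendsto (fun w : ℂ => (starRingEnd ℂ) w) (𝓝 z) (𝓝 ((starRingEnd ℂ) z)) :=
    (Complex.continuous_conj.tendsto z)
  have H : HasDerivAt (fsharp f) ((starRingEnd ℂ) d) z := by
    rw [hasDerivAt_iff_isLittleO] at hd ⊢
    have h1 := hd.comp_tendsto hconj
    rw [← Asymptotics.isLittleO_norm_left, ← Asymptotics.isLittleO_norm_right] at h1 ⊢
    convert h1 using 2 with w
    · have : fsharp f w - fsharp f z - (w - z) • (starRingEnd ℂ) d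
          = (starRingEnd ℂ) (f ((starRingEnd ℂ) w) - f ((starRingEnd ℂ) z)
            - ((starRingEnd ℂ) w - (starRingEnd ℂ) z) • d) := by
        simp only [fsharp, smul_eq_mul, map_sub, map_mul, Complex.conj_conj]
      rw [this, starRingEnd_apply, norm_star]
      simp [Function.comp]
    · rename_i x
      simp only [Function.comp_apply]
      rw [show (starRingEnd ℂ) x - (starRingEnd ℂ) z = (starRingEnd ℂ) (x - z) from
        (map_sub _ _ _).symm, starRingEnd_apply, norm_star]
  exact H.differentiableAt

/-- If `E` is in the degenerate Hermite–Biehler class and `f ∈ 𝓗^∞(E)` with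
`‖f/E‖_∞ ≤ 1`, then `f − λE` is in the degenerate Hermite–Biehler class for every
`|λ| ≥ 1`. -/
theorem sub_lambda_mul_mem_HBbar (E f : ℂ → ℂ)
    (hE : Differentiable ℂ E) (hf : Differentiable ℂ f)
    (hHB : ∀ z : ℂ, 0 < z.im →
      ‖E ((starRingEnd ℂ) z)‖ ≤ ‖E z‖)
    (hbound : ∀ x : ℝ, ‖f x‖ ≤ ‖E x‖)
    (hbound' : ∀ x : ℝ, ‖fsharp f x‖ ≤ ‖E x‖)
    (hup : ∃ C : ℝ, ∀ z : ℂ, 0 < z.im → ‖f z‖ ≤ C * ‖E z‖)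
    (hup' : ∃ C : ℝ, ∀ z : ℂ, 0 < z.im →
      ‖fsharp f z‖ ≤ C * ‖E z‖) :
    ∀ lam : ℂ, 1 ≤ ‖lam‖ → ∀ z : ℂ, 0 < z.im →
      ‖f ((starRingEnd ℂ) z) - lam * E ((starRingEnd ℂ) z)‖
        ≤ ‖f z - lam * E z‖ := by
  have h1 : ∀ z : ℂ, 0 < z.im → ‖f z‖ ≤ ‖E z‖ :=
    lemA hf hE hbound hup
  have h2 : ∀ z : ℂ, 0 < z.im → ‖fsharp f z‖ ≤ ‖E z‖ :=
    lemA (fsharp_differentiable hf) hE hbound' hup'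
  -- strict case
  have key : ∀ mu : ℂ, 1 < ‖mu‖ → ∀ z : ℂ, 0 < z.im →
      ‖f ((starRingEnd ℂ) z) - mu * E ((starRingEnd ℂ) z)‖
        ≤ ‖f z - mu * E z‖ := by
    intro mu hmu
    set L : ℝ := ‖mu‖ with hL
    set G : ℂ → ℂ := fun z => fsharp f z - (starRingEnd ℂ) mu * fsharp E z with hG
    set H : ℂ → ℂ := fun z => f z - mu * E z with hH
    have hGd : Differentiable ℂ G :=
      (fsharp_differentiable hf).sub ((fsharp_differentiable hE).const_mul _)
    have hHd : Differentiable ℂ H := hf.sub (hE.const_mul _)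
    have hGH : ∀ z : ℂ, G z = (starRingEnd ℂ) (f ((starRingEnd ℂ) z)
        - mu * E ((starRingEnd ℂ) z)) := by
      intro z
      simp only [hG, fsharp, map_sub, map_mul, Complex.conj_conj]
    have hbdry : ∀ x : ℝ, ‖G x‖ ≤ ‖H x‖ := by
      intro x
      rw [hGH]
      have hx : (starRingEnd ℂ) (x : ℂ) = (x : ℂ) := Complex.conj_ofReal x
      rw [Complex.norm_conj, hx]
    have hEbnd : ∀ z : ℂ, 0 < z.im → (L - 1) * ‖E z‖ ≤ ‖H z‖ := by
      intro z hz
      have hfz := h1 z hz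
      have habs : ‖mu * E z‖ ≤ ‖H z‖ + ‖f z‖ := by
        calc ‖mu * E z‖ = ‖(mu * E z - f z) + f z‖ := by ring_nf
          _ ≤ ‖mu * E z - f z‖ + ‖f z‖ := norm_add_le _ _
          _ = ‖H z‖ + ‖f z‖ := by rw [hH]; rw [norm_sub_rev]
      rw [norm_mul] at habs
      nlinarith [norm_nonneg (E z)]
    have hint : ∀ z : ℂ, 0 < z.im →
        ‖G z‖ ≤ ((1 + L) / (L - 1)) * ‖H z‖ := by
      intro z hz
      have hG1 : ‖G z‖ ≤ (1 + L) * ‖E z‖ := by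
        calc ‖G z‖ ≤ ‖fsharp f z‖
            + ‖(starRingEnd ℂ) mu * fsharp E z‖ := by
              exact norm_sub_le _ _
          _ ≤ ‖E z‖ + L * ‖E z‖ := by
              have hfs : ‖fsharp E z‖ = ‖E ((starRingEnd ℂ) z)‖ := by
                rw [fsharp, Complex.norm_conj]
              have := hHB z hz
              rw [norm_mul, Complex.norm_conj, hfs]
              have h2' := h2 z hz
              nlinarith [norm_nonneg mu, this, h2']
          _ = (1 + L) * ‖E z‖ := by ring
      have hL1 : (0:ℝ) < L - 1 := by linarith
      have hE1 := hEbnd z hz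
      have hcalc : ((1 + L) / (L - 1)) * ((L - 1) * ‖E z‖)
          ≤ ((1 + L) / (L - 1)) * ‖H z‖ :=
        mul_le_mul_of_nonneg_left hE1 (by positivity)
      have hcc : ((1 + L) / (L - 1)) * ((L - 1) * ‖E z‖)
          = (1 + L) * ‖E z‖ := by
        field_simp
      nlinarith
    have hfin := lemA hGd hHd hbdry ⟨(1 + L) / (L - 1), hint⟩
    intro z hz
    have := hfin z hz
    rw [hGH, Complex.norm_conj] at this
    exact this
  intro lam hlam z hz
  rcases lt_or_eq_of_le hlam with hlt | heq
  · exact key lam hlt z hz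
  · -- |lam| = 1 : take limits
    have hcont : ∀ (c d : ℂ), Continuous (fun t : ℝ => ‖c - (1 + (t:ℂ)) * lam * d‖) := by
      intro c d
      apply continuous_norm.comp
      exact continuous_const.sub
        (((continuous_const.add Complex.continuous_ofReal).mul continuous_const).mul
          continuous_const)
    have hta : Tendsto (fun t : ℝ => ‖f ((starRingEnd ℂ) z)
        - (1 + (t:ℂ)) * lam * E ((starRingEnd ℂ) z)‖) (𝓝[>] (0:ℝ))
        (𝓝 (‖f ((starRingEnd ℂ) z) - lam * E ((starRingEnd ℂ) z)‖)) := by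
      have := ((hcont (f ((starRingEnd ℂ) z)) (E ((starRingEnd ℂ) z))).tendsto 0).mono_left
        (nhdsWithin_le_nhds (s := Set.Ioi (0:ℝ)))
      simpa using this
    have htb : Tendsto (fun t : ℝ => ‖f z - (1 + (t:ℂ)) * lam * E z‖) (𝓝[>] (0:ℝ))
        (𝓝 (‖f z - lam * E z‖)) := by
      have := ((hcont (f z) (E z)).tendsto 0).mono_left (nhdsWithin_le_nhds (s := Set.Ioi (0:ℝ)))
      simpa using this
    refine le_of_tendsto_of_tendsto hta htb ?_
    filter_upwards [self_mem_nhdsWithin] with t ht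
    have htpos : (0:ℝ) < t := ht
    have hmu : 1 < ‖(1 + (t:ℂ)) * lam‖ := by
      have h1t : (1 + (t:ℂ)) = ((1 + t : ℝ) : ℂ) := by push_cast; ring
      rw [norm_mul, h1t, Complex.norm_real, Real.norm_eq_abs, ← heq, mul_one, abs_of_pos (by linarith)]
      linarith
    exact key ((1 + (t:ℂ)) * lam) hmu z hz
end
end

section
/- Let E = A + iB be a Hermite–Biehler function (|E(z̄)| < |E(z)| for Im z > 0), where A = (E + E^#)/2 and B = (E − E^#)/(2i) are its real and imaginary parts on the real axis. Then A'(x)B(x) − A(x)B'(x) ≥ 0 for all real x, with strict inequality at every x with E(x) ≠ 0. -/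
set_option maxHeartbeats 1000000


open Complex Topology Filter Set

noncomputable section

/-- The Hermite–Biehler class: `E` entire with `|E(z̄)| < |E(z)|` on the upper half-plane. -/
def HermiteBiehler (E : ℂ → ℂ) : Prop :=
  Differentiable ℂ E ∧ ∀ z : ℂ, 0 < z.im →
    ‖E ((starRingEnd ℂ) z)‖ < ‖E z‖

lemma hasDerivAt_fsharp {f : ℂ → ℂ} {f' z : ℂ}
    (h : HasDerivAt f f' ((starRingEnd ℂ) z)) :
    HasDerivAt (fsharp f) ((starRingEnd ℂ) f') z := by
  rw [hasDerivAt_iff_isLittleO] at h ⊢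
  have hc : Filter.Tendsto (starRingEnd ℂ) (𝓝 z) (𝓝 ((starRingEnd ℂ) z)) :=
    (Complex.continuous_conj.tendsto z)
  have h2 := h.comp_tendsto hc
  rw [← Asymptotics.isLittleO_norm_norm] at h2 ⊢
  refine h2.congr (fun w => ?_) (fun w => ?_)
  · have : fsharp f w - fsharp f z - (w - z) • (starRingEnd ℂ) f'
        = (starRingEnd ℂ) (f ((starRingEnd ℂ) w) - f ((starRingEnd ℂ) z)
            - ((starRingEnd ℂ) w - (starRingEnd ℂ) z) • f') := by
      simp only [fsharp, smul_eq_mul, map_sub, map_mul, Complex.conj_conj]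
    simp only [Function.comp_apply]
    rw [this, RCLike.norm_conj]
  · simp only [Function.comp_apply]
    rw [← map_sub, RCLike.norm_conj]

lemma hb_key (E : ℂ → ℂ) (hE : HermiteBiehler E) (x : ℝ) (hx : E x ≠ 0) :
    (deriv E x * (starRingEnd ℂ) (E x)).im < 0 := by
  obtain ⟨hdiff, hlt⟩ := hE
  by_contra hcon
  push_neg at hcon
  set a : ℂ := E x with ha
  set b : ℂ := deriv E x with hbdef
  have hb : HasDerivAt E b x := (hdiff _).hasDerivAt
  -- E has no zeros in the upper half plane
  have hnz : ∀ z : ℂ, 0 < z.im → E z ≠ 0 := by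
    intro z hz h0
    have h2 := hlt z hz
    rw [h0, norm_zero] at h2
    exact absurd h2 (norm_nonneg _).not_gt
  -- fsharp E is entire
  have hsharp_diff : Differentiable ℂ (fsharp E) := fun z =>
    (hasDerivAt_fsharp (hdiff _).hasDerivAt).differentiableAt
  set F : ℂ → ℂ := fun z => fsharp E z / E z with hFdef
  have hconjx : (starRingEnd ℂ) (x : ℂ) = x := Complex.conj_ofReal x
  have hsharpx : fsharp E x = (starRingEnd ℂ) a := by
    simp only [fsharp, hconjx, ha]
  have hFx : F x = (starRingEnd ℂ) a / a := by rw [hFdef]; simp [hsharpx, ← ha]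
  have hFx_ne : F x ≠ 0 := by
    rw [hFx]
    exact div_ne_zero (star_ne_zero.mpr hx) hx
  have habsFx : ‖F x‖ = 1 := by
    rw [hFx, norm_div, Complex.norm_conj, div_self (norm_ne_zero_iff.mpr hx)]
  -- |F z| < 1 on the upper half plane
  have hFlt : ∀ z : ℂ, 0 < z.im → ‖F z‖ < 1 := by
    intro z hz
    have h1 : ‖fsharp E z‖ = ‖E ((starRingEnd ℂ) z)‖ := by
      simp [fsharp, Complex.norm_conj]
    rw [hFdef]
    simp only [norm_div, h1]
    rw [div_lt_one (norm_pos_iff.mpr (hnz z hz))]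
    exact hlt z hz
  -- F analytic at x
  have hFanal : AnalyticAt ℂ F x :=
    ((hsharp_diff.analyticAt _)).div ((hdiff.analyticAt _)) hx
  have hsharpD : HasDerivAt (fsharp E) ((starRingEnd ℂ) b) x := by
    have := hasDerivAt_fsharp (f := E) (z := (x:ℂ)) (f' := b) (by rw [hconjx]; exact hb)
    exact this
  have hFD : HasDerivAt F (((starRingEnd ℂ) b * a - (starRingEnd ℂ) a * b) / a ^ 2) x := by
    have := hsharpD.div hb hx
    rw [hsharpx] at this
    exact this
  -- Split: F locally constant near x, or factorization of F - F x
  by_cases hcc : ∀ᶠ z in 𝓝 (x:ℂ), F z - F x = 0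
  · -- locally constant: contradiction with |F| < 1 just above x
    rw [Metric.eventually_nhds_iff] at hcc
    obtain ⟨ε, hε, hball⟩ := hcc
    set z : ℂ := (x:ℂ) + (ε/2 : ℝ) * I with hz
    have him : z.im = ε/2 := by simp [hz]
    have hzx : z - (x:ℂ) = ((ε/2 : ℝ) : ℂ) * I := by rw [hz]; ring
    have hdist : dist z (x:ℂ) < ε := by
      rw [Complex.dist_eq, hzx, norm_mul, Complex.norm_I, mul_one, Complex.norm_real, Real.norm_eq_abs,
        abs_of_pos (by positivity)]
      linarith
    have h0 := hball hdist
    rw [sub_eq_zero] at h0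
    have hlt1 : ‖F z‖ < 1 := hFlt z (by rw [him]; positivity)
    rw [h0, habsFx] at hlt1
    exact lt_irrefl 1 hlt1
  · obtain ⟨k, g, hg_an, hg_ne, hg_eq⟩ :=
      ((hFanal.sub analyticAt_const).exists_eventuallyEq_pow_smul_nonzero_iff).mpr hcc
    have hg_eq' : ∀ᶠ z in 𝓝 (x:ℂ), F z - F x = (z - (x:ℂ))^k * g z := by
      filter_upwards [hg_eq] with z hzz
      simp only [Pi.sub_apply, smul_eq_mul] at hzz
      exact hzz
    have hk0 : k ≠ 0 := by
      intro h0
      have h1 := hg_eq'.self_of_nhds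
      rw [h0] at h1
      simp only [pow_zero, one_mul, sub_self] at h1
      exact hg_ne h1.symm
    set c' : ℂ := (starRingEnd ℂ) (F x) * g x with hc'
    have hc'_ne : c' ≠ 0 := mul_ne_zero (star_ne_zero.mpr hFx_ne) hg_ne
    clear_value c'
    -- semicircle inequality
    have hsemi : ∀ θ ∈ Icc (0:ℝ) Real.pi,
        (c' * Complex.exp (((k : ℝ) * θ : ℝ) * I)).re ≤ 0 := by
      have hclosed : IsClosed {θ : ℝ | (c' * Complex.exp (((k : ℝ) * θ : ℝ) * I)).re ≤ 0} := by
        apply isClosed_le _ continuous_const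
        fun_prop
      have hsub : Ioo (0:ℝ) Real.pi ⊆
          {θ : ℝ | (c' * Complex.exp (((k : ℝ) * θ : ℝ) * I)).re ≤ 0} := by
        intro θ hθ
        set u : ℂ := Complex.exp ((θ:ℂ) * I) with hu
        have hu_abs : ‖u‖ = 1 := Complex.norm_exp_ofReal_mul_I θ
        have hu_im : u.im = Real.sin θ := Complex.exp_ofReal_mul_I_im θ
        have hsin : 0 < Real.sin θ := Real.sin_pos_of_pos_of_lt_pi hθ.1 hθ.2
        obtain ⟨ε₁, hε₁, hball⟩ := Metric.eventually_nhds_iff.mp hg_eq'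
        have hpt : ∀ ε : ℝ, ε ∈ Ioo (0:ℝ) ε₁ →
            ((starRingEnd ℂ) (F x) * u^k * g ((x:ℂ) + ε*u)).re < 0 := by
          intro ε hεm
          set z : ℂ := (x:ℂ) + (ε:ℂ)*u with hzdef
          have hzx : z - (x:ℂ) = (ε:ℂ) * u := by rw [hzdef]; ring
          have hz_im : 0 < z.im := by
            have h2 : z.im = ε * Real.sin θ := by
              rw [hzdef]
              simp [hu_im]
            rw [h2]
            exact mul_pos hεm.1 hsin
          have hdist : dist z (x:ℂ) < ε₁ := by
            rw [Complex.dist_eq, hzx, norm_mul, hu_abs, mul_one, Complex.norm_real, Real.norm_eq_abs,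
              abs_of_pos hεm.1]
            exact hεm.2
          have heq := hball hdist
          rw [hzx] at heq
          have habs : ‖F z‖ < 1 := hFlt z hz_im
          have hns : Complex.normSq (F z) < Complex.normSq (F x) := by
            rw [← Complex.sq_norm, ← Complex.sq_norm, habsFx]
            nlinarith [norm_nonneg (F z)]
          set d : ℂ := F z - F x with hd
          have hFzd : F z = F x + d := by rw [hd]; ring
          rw [hFzd, Complex.normSq_add] at hns
          have h3 : ((starRingEnd ℂ) (F x) * d).re < 0 := by
            have h4 : (F x * (starRingEnd ℂ) d).re < 0 := by
              nlinarith [Complex.normSq_nonneg d]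
            have h5 : (starRingEnd ℂ) (F x) * d
                = (starRingEnd ℂ) (F x * (starRingEnd ℂ) d) := by
              rw [map_mul, Complex.conj_conj]
            rw [h5, Complex.conj_re]
            exact h4
          rw [heq] at h3
          have h6 : (starRingEnd ℂ) (F x) * (((ε:ℂ) * u)^k * g z)
              = ((ε^k : ℝ) : ℂ) * ((starRingEnd ℂ) (F x) * u^k * g z) := by
            push_cast
            ring
          rw [h6, Complex.re_ofReal_mul] at h3
          have hεk : (0:ℝ) < ε^k := pow_pos hεm.1 k
          nlinarith
        have h9 : Tendsto (fun ε : ℝ => g ((x:ℂ) + (ε:ℂ)*u)) (𝓝[>] (0:ℝ)) (𝓝 (g x)) := by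
          have h7 : Tendsto (fun ε : ℝ => (x:ℂ) + (ε:ℂ)*u) (𝓝 (0:ℝ)) (𝓝 (x:ℂ)) := by
            have hcont : Continuous (fun ε : ℝ => (x:ℂ) + (ε:ℂ)*u) := by continuity
            have h8 := hcont.tendsto 0
            simpa using h8
          exact hg_an.continuousAt.tendsto.comp (h7.mono_left nhdsWithin_le_nhds)
        have hlim : Tendsto
            (fun ε : ℝ => ((starRingEnd ℂ) (F x) * u^k * g ((x:ℂ) + (ε:ℂ)*u)).re)
            (𝓝[>] (0:ℝ)) (𝓝 (((starRingEnd ℂ) (F x) * u^k * g x).re)) :=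
          (Complex.continuous_re.tendsto _).comp (tendsto_const_nhds.mul h9)
        have hle : ((starRingEnd ℂ) (F x) * u^k * g x).re ≤ 0 :=
          le_of_tendsto hlim (eventually_of_mem
            (Ioo_mem_nhdsGT_of_mem ⟨le_refl (0:ℝ), hε₁⟩) (fun ε hεm => (hpt ε hεm).le))
        have huk : u^k = Complex.exp (((k:ℝ) * θ : ℝ) * I) := by
          rw [hu, ← Complex.exp_nat_mul]
          push_cast
          ring_nf
        have hfinal : c' * Complex.exp (((k:ℝ) * θ : ℝ) * I)
            = (starRingEnd ℂ) (F x) * u^k * g x := by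
          rw [huk, hc']
          ring
        rw [mem_setOf_eq, hfinal]
        exact hle
      have hcl := hclosed.closure_subset_iff.mpr hsub
      rw [closure_Ioo (ne_of_lt Real.pi_pos)] at hcl
      exact fun θ hθ => hcl hθ
    -- now split on k = 1 or k ≥ 2
    rcases eq_or_lt_of_le (Nat.one_le_iff_ne_zero.mpr hk0) with hk1 | hk2
    · -- k = 1 : compute g x = F'(x) and contradict hcon
      have hEE : (fun z => F z - F x) =ᶠ[𝓝 (x:ℂ)] (fun z => (z - (x:ℂ))^k * g z) := hg_eq'
      have hFD' : HasDerivAt (fun z => F z - F x)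
          (((starRingEnd ℂ) b * a - (starRingEnd ℂ) a * b) / a ^ 2) x := hFD.sub_const _
      have hRHS : HasDerivAt (fun z : ℂ => (z - (x:ℂ))^k * g z) (g x) x := by
        rw [← hk1]
        have h1 : HasDerivAt (fun z : ℂ => z - (x:ℂ)) 1 (x:ℂ) := by
          simpa using ((hasDerivAt_id (x:ℂ)).sub_const (x:ℂ))
        have h2 := h1.mul (hg_an.differentiableAt.hasDerivAt)
        simpa [Pi.mul_def] using h2
      have hD2 : HasDerivAt (fun z : ℂ => (z - (x:ℂ))^k * g z)
          (((starRingEnd ℂ) b * a - (starRingEnd ℂ) a * b) / a ^ 2) x :=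
        hEE.hasDerivAt_iff.mp hFD'
      have hgx : g x = ((starRingEnd ℂ) b * a - (starRingEnd ℂ) a * b) / a ^ 2 :=
        hRHS.unique hD2
      have hconj_a : (starRingEnd ℂ) a ≠ 0 := star_ne_zero.mpr hx
      have hc'eq : ((Complex.normSq a : ℝ) : ℂ) * c'
          = (starRingEnd ℂ) b * a - (starRingEnd ℂ) a * b := by
        rw [hc', hgx, hFx, map_div₀, Complex.conj_conj, ← Complex.mul_conj a]
        field_simp
      -- three sample points on the semicircle
      have hθ0 := hsemi 0 ⟨le_refl 0, Real.pi_pos.le⟩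
      have hθpi := hsemi Real.pi ⟨Real.pi_pos.le, le_refl _⟩
      have hθhalf := hsemi (Real.pi/2) ⟨by positivity, by linarith [Real.pi_pos]⟩
      rw [← hk1] at hθ0 hθpi hθhalf
      simp only [Nat.cast_one, one_mul] at hθ0 hθpi hθhalf
      have e0 : Complex.exp (((0:ℝ):ℂ) * I) = 1 := by simp
      have epi : Complex.exp (((Real.pi:ℝ):ℂ) * I) = -1 := by
        simpa using Complex.exp_pi_mul_I
      have ehalf : Complex.exp (((Real.pi/2:ℝ):ℂ) * I) = I := by
        rw [Complex.exp_mul_I, ← Complex.ofReal_cos, ← Complex.ofReal_sin,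
          Real.cos_pi_div_two, Real.sin_pi_div_two]
        simp
      rw [e0, mul_one] at hθ0
      rw [epi] at hθpi
      rw [ehalf] at hθhalf
      simp only [mul_neg, mul_one, Complex.neg_re] at hθpi
      have hre : c'.re = 0 := le_antisymm hθ0 (by linarith)
      have him' : 0 ≤ c'.im := by
        have : (c' * I).re = -c'.im := by simp [Complex.mul_re]
        rw [this] at hθhalf
        linarith
      -- imaginary part of hc'eq
      have him2 : Complex.normSq a * c'.im
          = ((starRingEnd ℂ) b * a - (starRingEnd ℂ) a * b).im := by
        rw [← hc'eq, Complex.im_ofReal_mul]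
      have him3 : ((starRingEnd ℂ) b * a - (starRingEnd ℂ) a * b).im
          = -2 * (b * (starRingEnd ℂ) a).im := by
        simp only [Complex.sub_im, Complex.mul_im, Complex.conj_re, Complex.conj_im]
        ring
      have hnsa : 0 < Complex.normSq a := Complex.normSq_pos.mpr hx
      have him4 : c'.im ≤ 0 := by nlinarith
      have : c' = 0 := by
        apply Complex.ext
        · exact hre
        · simp only [Complex.zero_im]
          linarith
      exact hc'_ne this
    · -- k ≥ 2 : full circle, contradiction with c' ≠ 0
      have hk2' : (2:ℝ) ≤ (k:ℝ) := by exact_mod_cast hk2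
      set ψ : ℝ := Complex.arg ((starRingEnd ℂ) c') with hψdef
      have hψ1 : -Real.pi < ψ := Complex.neg_pi_lt_arg _
      have hψ2 : ψ ≤ Real.pi := Complex.arg_le_pi _
      set β : ℝ := if 0 ≤ ψ then ψ else ψ + 2*Real.pi with hβdef
      have hβ0 : 0 ≤ β := by
        rw [hβdef]
        split_ifs with h
        · exact h
        · push_neg at h
          linarith [Real.pi_pos]
      have hβ2 : β ≤ 2*Real.pi := by
        rw [hβdef]
        split_ifs with h
        · linarith [Real.pi_pos]
        · linarith
      have hkpos : (0:ℝ) < (k:ℝ) := by linarith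
      have hθmem : β/(k:ℝ) ∈ Icc (0:ℝ) Real.pi := by
        constructor
        · positivity
        · rw [div_le_iff₀ hkpos]
          nlinarith [Real.pi_pos]
      have hcancel : (k:ℝ) * (β/(k:ℝ)) = β := by
        field_simp
      have h1 := hsemi (β/(k:ℝ)) hθmem
      rw [hcancel] at h1
      have h1' : (c' * Complex.exp ((ψ:ℂ) * I)).re ≤ 0 := by
        rw [hβdef] at h1
        split_ifs at h1 with h
        · exact h1
        · push_cast at h1
          rw [add_mul, Complex.exp_add, Complex.exp_two_pi_mul_I, mul_one] at h1
          exact h1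
      have habs_c : (starRingEnd ℂ) c' = ((‖c'‖ : ℝ) : ℂ) * Complex.exp ((ψ:ℂ) * I) := by
        have h2 := Complex.norm_mul_exp_arg_mul_I ((starRingEnd ℂ) c')
        rw [Complex.norm_conj] at h2
        exact h2.symm
      have hfin : (c' * (starRingEnd ℂ) c').re
          = ‖c'‖ * (c' * Complex.exp ((ψ:ℂ)*I)).re := by
        rw [habs_c, show c' * (((‖c'‖ : ℝ):ℂ) * Complex.exp ((ψ:ℂ)*I))
            = ((‖c'‖ : ℝ):ℂ) * (c' * Complex.exp ((ψ:ℂ)*I)) from by ring,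
          Complex.re_ofReal_mul]
      have hpos : 0 < (c' * (starRingEnd ℂ) c').re := by
        rw [Complex.mul_conj]
        simpa using Complex.normSq_pos.mpr hc'_ne
      have hnp : ‖c'‖ * (c' * Complex.exp ((ψ:ℂ)*I)).re ≤ 0 :=
        mul_nonpos_iff.mpr (Or.inl ⟨norm_nonneg c', h1'⟩)
      linarith only [hpos, hfin, hnp]

/-- For a Hermite–Biehler function `E = A + iB` (so that on `ℝ`, `A = Re E` and `B = Im E`),
one has `A'B − AB' ≥ 0` on `ℝ`, with strict inequality wherever `E(x) ≠ 0`. -/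
theorem hb_wronskian_nonneg (E : ℂ → ℂ) (hE : HermiteBiehler E) :
    ∀ x : ℝ,
      0 ≤ deriv (fun t : ℝ => (E t).re) x * (E x).im
            - (E x).re * deriv (fun t : ℝ => (E t).im) x
      ∧ (E x ≠ 0 →
          0 < deriv (fun t : ℝ => (E t).re) x * (E x).im
                - (E x).re * deriv (fun t : ℝ => (E t).im) x) := by
  intro x
  have hb : HasDerivAt E (deriv E (x:ℂ)) (x:ℂ) := (hE.1 _).hasDerivAt
  have h1 : HasDerivAt (fun t : ℝ => E t) (deriv E (x:ℂ)) x := hb.comp_ofReal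
  have hre : HasDerivAt (fun t : ℝ => (E t).re) ((deriv E (x:ℂ)).re) x := by
    have h2 := (Complex.reCLM.hasFDerivAt (x := E (x:ℂ))).comp_hasDerivAt x h1
    simpa [Function.comp_def] using h2
  have him : HasDerivAt (fun t : ℝ => (E t).im) ((deriv E (x:ℂ)).im) x := by
    have h2 := (Complex.imCLM.hasFDerivAt (x := E (x:ℂ))).comp_hasDerivAt x h1
    simpa [Function.comp_def] using h2
  rw [hre.deriv, him.deriv]
  by_cases hx : E (x:ℂ) = 0
  · refine ⟨by rw [hx]; simp, fun h => absurd hx h⟩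
  · have hkey := hb_key E hE x hx
    have hexp : (deriv E (x:ℂ) * (starRingEnd ℂ) (E (x:ℂ))).im
        = (deriv E (x:ℂ)).im * (E (x:ℂ)).re - (deriv E (x:ℂ)).re * (E (x:ℂ)).im := by
      simp only [Complex.mul_im, Complex.conj_re, Complex.conj_im]
      ring
    rw [hexp] at hkey
    exact ⟨by linarith, fun _ => by linarith⟩
end
end

section
/- Let E = A + iB be a Hermite–Biehler function such that A and B have no common zeros. Then all real zeros of A and all real zeros of B are simple, and the real zeros of A and B strictly interlace: between any two consecutive real zeros of A there is exactly one zero of B, and vice versa. -/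
open Complex Filter Set Topology

noncomputable section

lemma hasDerivAt_fsharp_s3 {E : ℂ → ℂ} (hE : Differentiable ℂ E) (z : ℂ) :
    HasDerivAt (fsharp E) ((starRingEnd ℂ) (deriv E ((starRingEnd ℂ) z))) z := by
  rw [hasDerivAt_iff_tendsto_slope]
  have h1 : Tendsto (starRingEnd ℂ) (𝓝[≠] z) (𝓝[≠] ((starRingEnd ℂ) z)) := by
    rw [tendsto_nhdsWithin_iff]
    constructor
    · exact ((Complex.continuous_conj).tendsto z).mono_left nhdsWithin_le_nhds
    · filter_upwards [self_mem_nhdsWithin] with w hw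
      simpa using fun h => hw ((starRingEnd ℂ).injective (by simpa using h))
  have h2 : Tendsto (slope E ((starRingEnd ℂ) z)) (𝓝[≠] ((starRingEnd ℂ) z))
      (𝓝 (deriv E ((starRingEnd ℂ) z))) := by
    rw [← hasDerivAt_iff_tendsto_slope]
    exact (hE _).hasDerivAt
  have h3 : Tendsto (fun w => (starRingEnd ℂ) (slope E ((starRingEnd ℂ) z) ((starRingEnd ℂ) w)))
      (𝓝[≠] z) (𝓝 ((starRingEnd ℂ) (deriv E ((starRingEnd ℂ) z)))) :=
    (Complex.continuous_conj.tendsto _).comp (h2.comp h1)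
  refine h3.congr (fun w => ?_)
  simp only [slope_def_field, fsharp, Function.comp]
  simp [map_div₀]

/-- Existence of a k-th root in the upper half plane, k ≥ 2. -/
lemma exists_root_im_pos {w : ℂ} (hw : w.im ≠ 0) {k : ℕ} (hk : 2 ≤ k) :
    ∃ d : ℂ, 0 < d.im ∧ d ^ k = w := by
  have hw0 : w ≠ 0 := fun h => hw (by simp [h])
  have hkpos : (0:ℝ) < k := by positivity
  rcases lt_or_gt_of_ne hw with hneg | hpos
  · -- w.im < 0 : arg w ∈ (-π, 0)
    refine ⟨Complex.exp (Complex.log w / k + 2 * Real.pi * I / k), ?_, ?_⟩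
    · rw [Complex.exp_im]
      have him : (Complex.log w / k + 2 * Real.pi * I / k).im
          = w.arg / k + 2 * Real.pi / k := by
        simp [Complex.add_im, Complex.div_ofNat_im, Complex.log_im]
      rw [him]
      apply mul_pos (Real.exp_pos _)
      apply Real.sin_pos_of_pos_of_lt_pi
      · have h1 : -Real.pi < w.arg := Complex.neg_pi_lt_arg w
        have : 0 < w.arg + 2 * Real.pi := by nlinarith [Real.pi_pos]
        calc (0:ℝ) < (w.arg + 2 * Real.pi) / k := by positivity
          _ = w.arg / k + 2 * Real.pi / k := by ring
      · have h2 : w.arg < 0 := Complex.arg_neg_iff.mpr hneg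
        have hk2 : (2:ℝ) ≤ k := by exact_mod_cast hk
        have : w.arg / k + 2 * Real.pi / k < 2 * Real.pi / k := by
          have : w.arg / k < 0 := div_neg_of_neg_of_pos h2 hkpos
          linarith
        have h3 : 2 * Real.pi / k ≤ Real.pi := by
          rw [div_le_iff₀ hkpos]
          nlinarith [Real.pi_pos]
        linarith
    · rw [← Complex.exp_nat_mul]
      have : (k:ℂ) ≠ 0 := by exact_mod_cast (by omega : k ≠ 0)
      rw [mul_add, mul_div_cancel₀ _ this, mul_div_cancel₀ _ this,
        Complex.exp_add, Complex.exp_log hw0]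
      rw [show ((2:ℂ) * Real.pi * I) = 2 * Real.pi * I by norm_num]
      rw [Complex.exp_two_pi_mul_I, mul_one]
  · -- w.im > 0 : arg w ∈ (0, π)
    refine ⟨Complex.exp (Complex.log w / k), ?_, ?_⟩
    · rw [Complex.exp_im]
      have him : (Complex.log w / k).im = w.arg / k := by
        simp [Complex.log_im]
      rw [him]
      apply mul_pos (Real.exp_pos _)
      apply Real.sin_pos_of_pos_of_lt_pi
      · have h0 : 0 < w.arg := by
          rcases (Complex.arg_nonneg_iff.mpr hpos.le).lt_or_eq with h | h
          · exact h
          · exact absurd (Complex.arg_eq_zero_iff.mp h.symm).2 (ne_of_gt hpos)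
        positivity
      · have h2 : w.arg ≤ Real.pi := Complex.arg_le_pi w
        have hk2 : (2:ℝ) ≤ k := by exact_mod_cast hk
        calc w.arg / k ≤ Real.pi / k := by gcongr
          _ < Real.pi := by
              rw [div_lt_iff₀ hkpos]
              nlinarith [Real.pi_pos]
    · rw [← Complex.exp_nat_mul]
      have : (k:ℂ) ≠ 0 := by exact_mod_cast (by omega : k ≠ 0)
      rw [mul_div_cancel₀ _ this, Complex.exp_log hw0]

lemma exists_good_direction {c : ℂ} (hc : c ≠ 0) {k : ℕ} (hk : 2 ≤ k) :
    ∃ d : ℂ, 0 < d.im ∧ 0 < (c * d ^ k).re := by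
  obtain ⟨w, hw1, hw2⟩ : ∃ w : ℂ, w.im ≠ 0 ∧ 0 < (c * w).re := by
    by_cases h : c.im = 0
    · refine ⟨c + I, by simp [h], ?_⟩
      have hre : c.re ≠ 0 := fun h' => hc (Complex.ext h' h)
      simp [Complex.mul_re, Complex.add_re, Complex.add_im, h]
      positivity
    · refine ⟨(starRingEnd ℂ) c, by simpa using h, ?_⟩
      have : (c * (starRingEnd ℂ) c).re = Complex.normSq c := by
        rw [Complex.mul_conj]; simp
      rw [this]
      exact Complex.normSq_pos.mpr hc
  obtain ⟨d, hd1, hd2⟩ := exists_root_im_pos hw1 hk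
  exact ⟨d, hd1, by rw [hd2]; exact hw2⟩

/-- Boundary point lemma: if `|G| < 1` on the open upper half-plane, `G` is analytic
at a real point `x₀` with `|G x₀| = 1`, then `deriv G x₀ ≠ 0`. -/
lemma boundary_deriv_ne_zero {G : ℂ → ℂ} {x₀ : ℝ} (hG : AnalyticAt ℂ G (x₀:ℂ))
    (habs : ∀ z : ℂ, 0 < z.im → ‖G z‖ < 1)
    (hx : ‖G (x₀:ℂ)‖ = 1) : deriv G (x₀:ℂ) ≠ 0 := by
  intro hder
  set w₀ := G (x₀:ℂ) with hw₀
  have hw₀ne : w₀ ≠ 0 := by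
    intro h; rw [h] at hx; simp at hx
  set h : ℂ → ℂ := fun z => G z - w₀ with hh_def
  have hh : AnalyticAt ℂ h (x₀:ℂ) := hG.sub analyticAt_const
  have htend : Tendsto (fun t : ℝ => (x₀:ℂ) + t * I) (𝓝[>] 0) (𝓝 (x₀:ℂ)) := by
    have cont : Continuous (fun t : ℝ => (x₀:ℂ) + t * I) := by continuity
    have : Tendsto (fun t : ℝ => (x₀:ℂ) + t * I) (𝓝 0) (𝓝 (x₀:ℂ)) := by
      simpa using cont.tendsto (0:ℝ)
    exact this.mono_left nhdsWithin_le_nhds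
  have hnot : ¬ (∀ᶠ z in 𝓝 (x₀:ℂ), h z = 0) := by
    intro hev
    have := htend.eventually hev
    obtain ⟨t, ht, h0⟩ := (this.and self_mem_nhdsWithin).exists
    have him : (0:ℝ) < ((x₀:ℂ) + t * I).im := by simpa using h0
    have := habs _ him
    have : ‖G ((x₀:ℂ) + t * I)‖ = 1 := by
      have : G ((x₀:ℂ) + t * I) = w₀ := by
        have := ht; simpa [hh_def, sub_eq_zero] using ht
      rw [this]; exact hx
    linarith [habs _ him]
  -- order of h is a finite natural number k ≥ 2
  obtain ⟨k, hk⟩ : ∃ k : ℕ, analyticOrderAt h (x₀:ℂ) = k := by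
    rcases eq_or_ne (analyticOrderAt h (x₀:ℂ)) ⊤ with ht | ht
    · exact absurd (analyticOrderAt_eq_top.mp ht) hnot
    · lift analyticOrderAt h (x₀:ℂ) to ℕ using ht with k hk
      exact ⟨k, rfl⟩
  obtain ⟨g, hg, hg0, heq⟩ := hh.analyticOrderAt_eq_natCast.mp hk
  have hk0 : k ≠ 0 := by
    intro h0
    rw [h0] at heq
    have : h (x₀:ℂ) = g (x₀:ℂ) := by
      have := heq.self_of_nhds; simpa using this
    apply hg0
    rw [← this, hh_def]; simp [hw₀]
  have hderh : deriv h (x₀:ℂ) = 0 := by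
    rw [hh_def]
    rw [deriv_sub_const]
    exact hder
  have hk1 : k ≠ 1 := by
    intro h1
    rw [h1] at heq
    have : deriv h (x₀:ℂ) = g (x₀:ℂ) := by
      have hd : deriv (fun z => (z - (x₀:ℂ)) ^ 1 • g z) (x₀:ℂ) = g (x₀:ℂ) := by
        have hg' : HasDerivAt g (deriv g (x₀:ℂ)) (x₀:ℂ) := hg.differentiableAt.hasDerivAt
        have h1' : HasDerivAt (fun z : ℂ => (z - (x₀:ℂ))) 1 (x₀:ℂ) :=
          (hasDerivAt_id _).sub_const _
        have := (h1'.fun_mul hg')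
        simp only [pow_one, smul_eq_mul]
        rw [this.deriv]
        simp
      have heq' : h =ᶠ[𝓝 (x₀:ℂ)] fun z => (z - (x₀:ℂ)) ^ 1 • g z := heq
      rw [heq'.deriv_eq, hd]
    rw [hderh] at this
    exact hg0 this.symm
  have hk2 : 2 ≤ k := by omega
  -- choose a good direction
  have hc : (starRingEnd ℂ) w₀ * g (x₀:ℂ) ≠ 0 :=
    mul_ne_zero (by simpa using hw₀ne) hg0
  obtain ⟨d, hd, hgood⟩ := exists_good_direction hc hk2
  -- pull everything back to small positive ε
  have htend2 : Tendsto (fun ε : ℝ => (x₀:ℂ) + ε * d) (𝓝[>] 0) (𝓝 (x₀:ℂ)) := by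
    have cont : Continuous (fun ε : ℝ => (x₀:ℂ) + ε * d) := by continuity
    have : Tendsto (fun ε : ℝ => (x₀:ℂ) + ε * d) (𝓝 0) (𝓝 (x₀:ℂ)) := by
      simpa using cont.tendsto (0:ℝ)
    exact this.mono_left nhdsWithin_le_nhds
  have hcont : Tendsto (fun ε : ℝ => ((starRingEnd ℂ) w₀ * (d ^ k * g ((x₀:ℂ) + ε * d))).re)
      (𝓝[>] 0) (𝓝 (((starRingEnd ℂ) w₀ * (d ^ k * g (x₀:ℂ))).re)) := by
    have : Tendsto (fun z : ℂ => ((starRingEnd ℂ) w₀ * (d ^ k * g z)).re) (𝓝 (x₀:ℂ))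
        (𝓝 (((starRingEnd ℂ) w₀ * (d ^ k * g (x₀:ℂ))).re)) :=
      (Complex.continuous_re.tendsto _).comp
        (tendsto_const_nhds.mul (tendsto_const_nhds.mul hg.continuousAt))
    exact this.comp htend2
  have hpos' : 0 < ((starRingEnd ℂ) w₀ * (d ^ k * g (x₀:ℂ))).re := by
    have e : (starRingEnd ℂ) w₀ * (d ^ k * g (x₀:ℂ))
        = (starRingEnd ℂ) w₀ * g (x₀:ℂ) * d ^ k := by ring
    rw [e]; exact hgood
  have hev1 : ∀ᶠ ε : ℝ in 𝓝[>] 0,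
      0 < ((starRingEnd ℂ) w₀ * (d ^ k * g ((x₀:ℂ) + ε * d))).re :=
    hcont.eventually (eventually_gt_nhds hpos')
  have hev2 : ∀ᶠ ε : ℝ in 𝓝[>] 0,
      h ((x₀:ℂ) + ε * d) = ((x₀:ℂ) + ε * d - (x₀:ℂ)) ^ k • g ((x₀:ℂ) + ε * d) :=
    htend2.eventually heq
  obtain ⟨ε, hε1, hε2, hε3⟩ := (hev1.and (hev2.and self_mem_nhdsWithin)).exists
  set z := (x₀:ℂ) + ε * d with hz
  have hzim : 0 < z.im := by
    have : z.im = ε * d.im := by simp [hz]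
    rw [this]; exact mul_pos hε3 hd
  have hsub : z - (x₀:ℂ) = (ε:ℂ) * d := by rw [hz]; ring
  have hGz : G z = w₀ + ((ε:ℂ) * d) ^ k * g z := by
    have h2 := hε2
    rw [hsub] at h2
    simp only [smul_eq_mul] at h2
    exact sub_eq_iff_eq_add'.mp h2
  set u := ((ε:ℂ) * d) ^ k * g z with hu
  have h1 : Complex.normSq (G z)
      = Complex.normSq w₀ + Complex.normSq u + 2 * (w₀ * (starRingEnd ℂ) u).re := by
    rw [hGz]; exact Complex.normSq_add _ _
  have hre : (w₀ * (starRingEnd ℂ) u).re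
      = ε ^ k * ((starRingEnd ℂ) w₀ * (d ^ k * g z)).re := by
    have hu' : u = ((ε ^ k : ℝ) : ℂ) * (d ^ k * g z) := by
      rw [hu]; push_cast; ring
    rw [hu', map_mul, Complex.conj_ofReal]
    have e : w₀ * (((ε ^ k : ℝ):ℂ) * (starRingEnd ℂ) (d ^ k * g z))
        = ((ε ^ k : ℝ):ℂ) * (w₀ * (starRingEnd ℂ) (d ^ k * g z)) := by ring
    rw [e, Complex.re_ofReal_mul]
    congr 1
    calc (w₀ * (starRingEnd ℂ) (d ^ k * g z)).re
        = ((starRingEnd ℂ) (w₀ * (starRingEnd ℂ) (d ^ k * g z))).re :=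
          (Complex.conj_re _).symm
      _ = ((starRingEnd ℂ) w₀ * (d ^ k * g z)).re := by rw [map_mul, Complex.conj_conj]
  have hnormw : Complex.normSq w₀ = 1 := by
    have h3 := Complex.sq_norm w₀
    rw [hx] at h3; simpa using h3.symm
  have habs1 : ‖G z‖ < 1 := habs z hzim
  have hlt : Complex.normSq (G z) < 1 := by
    rw [← Complex.sq_norm]
    nlinarith [norm_nonneg (G z)]
  have hpos2 : 0 < ε ^ k := pow_pos hε3 k
  nlinarith [Complex.normSq_nonneg u, mul_pos hpos2 hε1]

lemma same_sign {f : ℝ → ℝ} {a b : ℝ} (hab : a ≤ b) (hf : ContinuousOn f (Icc a b))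
    (h : ∀ y ∈ Icc a b, f y ≠ 0) : 0 < f a * f b := by
  have ha := h a (left_mem_Icc.mpr hab)
  have hb := h b (right_mem_Icc.mpr hab)
  by_contra hle
  push_neg at hle
  have : f a * f b ≤ 0 := hle
  rcases mul_nonpos_iff.mp this with ⟨h1, h2⟩ | ⟨h1, h2⟩
  · have : (0:ℝ) ∈ Icc (f b) (f a) := ⟨h2, h1⟩
    obtain ⟨y, hy, hfy⟩ := intermediate_value_Icc' hab hf this
    exact h y hy hfy
  · have : (0:ℝ) ∈ Icc (f a) (f b) := ⟨h1, h2⟩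
    obtain ⟨y, hy, hfy⟩ := intermediate_value_Icc hab hf this
    exact h y hy hfy

lemma slope_right_nonneg {f : ℝ → ℝ} {x₁ x₂ L : ℝ} (hf : HasDerivAt f L x₁)
    (h0 : f x₁ = 0) (h12 : x₁ < x₂) (hpos : ∀ y ∈ Ioo x₁ x₂, 0 < f y) : 0 ≤ L := by
  have ht : Tendsto (slope f x₁) (𝓝[>] x₁) (𝓝 L) :=
    (hasDerivAt_iff_tendsto_slope.mp hf).mono_left
      (nhdsWithin_mono _ (fun y hy => ne_of_gt hy))
  refine ge_of_tendsto ht ?_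
  filter_upwards [Ioo_mem_nhdsGT_of_mem ⟨le_refl x₁, h12⟩] with y hy
  rw [slope_def_field, h0, sub_zero]
  exact le_of_lt (div_pos (hpos y hy) (by linarith [hy.1]))

lemma slope_left_nonpos {f : ℝ → ℝ} {x₁ x₂ L : ℝ} (hf : HasDerivAt f L x₂)
    (h0 : f x₂ = 0) (h12 : x₁ < x₂) (hpos : ∀ y ∈ Ioo x₁ x₂, 0 < f y) : L ≤ 0 := by
  have ht : Tendsto (slope f x₂) (𝓝[<] x₂) (𝓝 L) :=
    (hasDerivAt_iff_tendsto_slope.mp hf).mono_left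
      (nhdsWithin_mono _ (fun y hy => ne_of_lt hy))
  refine le_of_tendsto ht ?_
  filter_upwards [Ioo_mem_nhdsLT_of_mem ⟨h12, le_refl x₂⟩] with y hy
  rw [slope_def_field, h0, sub_zero]
  exact le_of_lt (div_neg_of_pos_of_neg (hpos y hy) (by linarith [hy.2]))

lemma exists_pos_right {f : ℝ → ℝ} {x₁ x₂ L : ℝ} (hf : HasDerivAt f L x₁)
    (h0 : f x₁ = 0) (hL : 0 < L) (h12 : x₁ < x₂) : ∃ y ∈ Ioo x₁ x₂, 0 < f y := by
  have ht : Tendsto (slope f x₁) (𝓝[>] x₁) (𝓝 L) :=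
    (hasDerivAt_iff_tendsto_slope.mp hf).mono_left
      (nhdsWithin_mono _ (fun y hy => ne_of_gt hy))
  have h1 : ∀ᶠ y in 𝓝[>] x₁, 0 < slope f x₁ y := ht.eventually (eventually_gt_nhds hL)
  obtain ⟨y, hs, hy⟩ := (h1.and (Ioo_mem_nhdsGT_of_mem ⟨le_refl x₁, h12⟩)).exists
  refine ⟨y, hy, ?_⟩
  rw [slope_def_field, h0, sub_zero] at hs
  have hy1 : 0 < y - x₁ := by linarith [hy.1]
  have := mul_pos hs hy1
  rw [div_mul_cancel₀] at this
  · exact this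
  · exact ne_of_gt hy1

lemma no_second_zero {f f' : ℝ → ℝ} (hf : ∀ x, HasDerivAt f (f' x) x)
    {y₁ y₂ : ℝ} (h12 : y₁ < y₂) (hz1 : f y₁ = 0) (hz2 : f y₂ = 0)
    (hd : ∀ y, y₁ ≤ y → y ≤ y₂ → f y = 0 → 0 < f' y) : False := by
  have hcont : Continuous f :=
    Differentiable.continuous (fun x => (hf x).differentiableAt)
  obtain ⟨a₀, ha₀, hfa₀⟩ := exists_pos_right (hf y₁) hz1 (hd y₁ le_rfl h12.le hz1) h12
  set S : Set ℝ := {y | y ∈ Icc a₀ y₂ ∧ f y = 0} with hS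
  have hSclosed : IsClosed S := by
    have : S = Icc a₀ y₂ ∩ f ⁻¹' {0} := by
      ext y; simp only [hS, Set.mem_setOf_eq, Set.mem_inter_iff, Set.mem_preimage,
        Set.mem_singleton_iff]
    rw [this]
    exact isClosed_Icc.inter (isClosed_singleton.preimage hcont)
  have hSne : S.Nonempty := ⟨y₂, ⟨ha₀.2.le, le_rfl⟩, hz2⟩
  have hSbdd : BddBelow S := ⟨a₀, fun y hy => hy.1.1⟩
  set c := sInf S with hc
  have hcS : c ∈ S := hSclosed.csInf_mem hSne hSbdd
  have hfc : f c = 0 := hcS.2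
  have hca : a₀ < c := lt_of_le_of_ne hcS.1.1 (fun h => by rw [← h] at hfc; linarith)
  have hcy2 : c ≤ y₂ := hcS.1.2
  have hposc : ∀ y ∈ Ico a₀ c, 0 < f y := by
    intro y hy
    have hne : ∀ w ∈ Icc a₀ y, f w ≠ 0 := by
      intro w hw hw0
      have : w ∈ S := ⟨⟨hw.1, le_trans hw.2 (le_trans hy.2.le hcy2)⟩, hw0⟩
      have := csInf_le hSbdd this
      rw [← hc] at this
      linarith [hy.2, hw.2]
    have := same_sign hy.1 hcont.continuousOn hne
    nlinarith [hfa₀]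
  have hd'c : 0 < f' c := hd c (by linarith [ha₀.1]) hcy2 hfc
  have ht : Tendsto (slope f c) (𝓝[<] c) (𝓝 (f' c)) :=
    (hasDerivAt_iff_tendsto_slope.mp (hf c)).mono_left
      (nhdsWithin_mono _ (fun y hy => ne_of_lt hy))
  have hle : f' c ≤ 0 := by
    refine le_of_tendsto ht ?_
    filter_upwards [Ioo_mem_nhdsLT_of_mem ⟨hca, le_refl c⟩] with y hy
    rw [slope_def_field, hfc, sub_zero]
    exact le_of_lt (div_neg_of_pos_of_neg (hposc y ⟨hy.1.le, hy.2⟩) (by linarith [hy.2]))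
  linarith

lemma interlace_core {a b a' b' : ℝ → ℝ}
    (ha : ∀ x, HasDerivAt a (a' x) x) (hb : ∀ x, HasDerivAt b (b' x) x)
    (hW : ∀ x, a' x * b x - a x * b' x ≠ 0)
    (hWc : Continuous (fun x => a' x * b x - a x * b' x))
    (hnc : ∀ x, ¬(a x = 0 ∧ b x = 0))
    {x₁ x₂ : ℝ} (h12 : x₁ < x₂) (h1 : a x₁ = 0) (h2 : a x₂ = 0)
    (hno : ∀ y ∈ Ioo x₁ x₂, a y ≠ 0) :
    ∃! y, y ∈ Ioo x₁ x₂ ∧ b y = 0 := by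
  have hacont : Continuous a := Differentiable.continuous (fun x => (ha x).differentiableAt)
  have hbcont : Continuous b := Differentiable.continuous (fun x => (hb x).differentiableAt)
  set m := (x₁ + x₂) / 2 with hm
  have hmI : m ∈ Ioo x₁ x₂ := ⟨by linarith, by linarith⟩
  have ham : a m ≠ 0 := hno m hmI
  -- sign constancy of a on the interval
  have hsame : ∀ y ∈ Ioo x₁ x₂, 0 < a y * a m := by
    intro y hy
    rcases le_total y m with h | h
    · have := same_sign h hacont.continuousOn
        (fun w hw => hno w ⟨lt_of_lt_of_le hy.1 hw.1, lt_of_le_of_lt hw.2 hmI.2⟩)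
      exact this
    · have := same_sign h hacont.continuousOn
        (fun w hw => hno w ⟨lt_of_lt_of_le hmI.1 hw.1, lt_of_le_of_lt hw.2 hy.2⟩)
      nlinarith
  -- derivative signs at the endpoints
  have hda1 : 0 < a' x₁ * a m := by
    have h0 : (fun y => a y * a m) x₁ = 0 := by simp [h1]
    have hnn : 0 ≤ a' x₁ * a m :=
      slope_right_nonneg ((ha x₁).mul_const (a m)) h0 h12 (fun y hy => hsame y hy)
    rcases hnn.lt_or_eq with h | h
    · exact h
    · exfalso
      have ha1 : a' x₁ ≠ 0 := by
        intro hz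
        have := hW x₁
        rw [hz, h1] at this; simp at this
      exact (mul_ne_zero ha1 ham) h.symm
  have hda2 : a' x₂ * a m < 0 := by
    have h0 : (fun y => a y * a m) x₂ = 0 := by simp [h2]
    have hnn : a' x₂ * a m ≤ 0 :=
      slope_left_nonpos ((ha x₂).mul_const (a m)) h0 h12 (fun y hy => hsame y hy)
    rcases hnn.lt_or_eq with h | h
    · exact h
    · exfalso
      have ha2 : a' x₂ ≠ 0 := by
        intro hz
        have := hW x₂
        rw [hz, h2] at this; simp at this
      exact (mul_ne_zero ha2 ham) h
  -- W has the same sign at x₁ and x₂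
  have hWW : 0 < (a' x₁ * b x₁ - a x₁ * b' x₁) * (a' x₂ * b x₂ - a x₂ * b' x₂) :=
    same_sign h12.le hWc.continuousOn (fun y _ => hW y)
  rw [h1, h2] at hWW
  simp only [zero_mul, sub_zero] at hWW
  -- b has opposite signs at the endpoints
  have hbb : b x₁ * b x₂ < 0 := by
    by_contra hcon
    push_neg at hcon
    nlinarith [mul_pos hWW (mul_self_pos.mpr ham), mul_neg_of_pos_of_neg hda1 hda2,
      mul_nonneg hcon (mul_self_nonneg (a m))]
  -- existence
  have hex : ∃ y ∈ Ioo x₁ x₂, b y = 0 := by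
    rcases mul_neg_iff.mp hbb with ⟨hp, hn⟩ | ⟨hn, hp⟩
    · obtain ⟨y, hy, hby⟩ := intermediate_value_Ioo' h12.le hbcont.continuousOn
        (show (0:ℝ) ∈ Ioo (b x₂) (b x₁) from ⟨hn, hp⟩)
      exact ⟨y, hy, hby⟩
    · obtain ⟨y, hy, hby⟩ := intermediate_value_Ioo h12.le hbcont.continuousOn
        (show (0:ℝ) ∈ Ioo (b x₁) (b x₂) from ⟨hn, hp⟩)
      exact ⟨y, hy, hby⟩
  -- pairwise sign agreement of b' at zeros of b
  have pair : ∀ z w, z ∈ Ioo x₁ x₂ → w ∈ Ioo x₁ x₂ → b z = 0 → b w = 0 →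
      0 < b' z * b' w := by
    have main : ∀ z w, z ≤ w → z ∈ Ioo x₁ x₂ → w ∈ Ioo x₁ x₂ → b z = 0 → b w = 0 →
        0 < b' z * b' w := by
      intro z w hzw hzI hwI hbz hbw
      have hWW2 : 0 < (a' z * b z - a z * b' z) * (a' w * b w - a w * b' w) :=
        same_sign hzw hWc.continuousOn (fun y _ => hW y)
      rw [hbz, hbw] at hWW2
      simp only [mul_zero, zero_sub] at hWW2
      have haa : 0 < a z * a w := by
        have h1 := hsame z hzI
        have h2 := hsame w hwI
        nlinarith [mul_pos h1 h2, mul_self_pos.mpr ham]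
      by_contra hcon
      push_neg at hcon
      nlinarith [mul_nonneg haa.le (neg_nonneg.mpr hcon)]
    intro z w hzI hwI hbz hbw
    rcases le_total z w with h | h
    · exact main z w h hzI hwI hbz hbw
    · have := main w z h hwI hzI hbw hbz
      nlinarith
  obtain ⟨y₀, hy₀I, hy₀z⟩ := hex
  refine ⟨y₀, ⟨hy₀I, hy₀z⟩, ?_⟩
  rintro y ⟨hyI, hyz⟩
  by_contra hne
  have key : ∀ u v, u ∈ Ioo x₁ x₂ → v ∈ Ioo x₁ x₂ → b u = 0 → b v = 0 →
      u < v → False := by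
    intro u v huI hvI hbu hbv huv
    have hbu' : b' u ≠ 0 := by
      intro hz
      have h3 := pair u u huI huI hbu hbu
      rw [hz] at h3; simp at h3
    apply no_second_zero (f := fun y => b y * b' u) (f' := fun y => b' y * b' u)
      (fun x => (hb x).mul_const _) huv (by simp [hbu]) (by simp [hbv])
    intro y hy1 hy2 hy0
    have hyI' : y ∈ Ioo x₁ x₂ := ⟨lt_of_lt_of_le huI.1 hy1, lt_of_le_of_lt hy2 hvI.2⟩
    have hby : b y = 0 := by
      rcases mul_eq_zero.mp hy0 with h | h
      · exact h
      · exact absurd h hbu'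
    exact pair y u hyI' huI hby hbu
  rcases lt_or_gt_of_ne hne with h | h
  · exact key y y₀ hyI hy₀I hyz hy₀z h
  · exact key y₀ y hy₀I hyI hy₀z hyz h

lemma W_ne_zero {E : ℂ → ℂ} (hE : HermiteBiehler E) (hr : ∀ x : ℝ, E x ≠ 0) (x₀ : ℝ) :
    (deriv E x₀).re * (E x₀).im - (E x₀).re * (deriv E x₀).im ≠ 0 := by
  intro hW
  set G : ℂ → ℂ := fun z => fsharp E z / E z with hG_def
  have hEd := hE.1
  have hfd : Differentiable ℂ (fsharp E) := fun z => (hasDerivAt_fsharp_s3 hEd z).differentiableAt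
  have hGa : AnalyticAt ℂ G (x₀:ℂ) :=
    ((hfd.analyticAt _).div (hEd.analyticAt _) (hr x₀))
  have habs : ∀ z : ℂ, 0 < z.im → ‖G z‖ < 1 := by
    intro z hz
    have hlt := hE.2 z hz
    have hEz : E z ≠ 0 := fun h0 => by
      rw [h0, norm_zero] at hlt
      exact absurd hlt (norm_nonneg _).not_gt
    have habs2 : ‖fsharp E z‖ = ‖E ((starRingEnd ℂ) z)‖ := by
      simp [fsharp]
    rw [hG_def]
    simp only [norm_div]
    rw [div_lt_one (norm_pos_iff.mpr hEz)]
    rw [habs2]; exact hlt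
  have hx : ‖G (x₀:ℂ)‖ = 1 := by
    rw [hG_def]
    simp only [norm_div]
    have : fsharp E (x₀:ℂ) = (starRingEnd ℂ) (E (x₀:ℂ)) := by
      simp [fsharp, Complex.conj_ofReal]
    rw [this, Complex.norm_conj, div_self (by simp [hr x₀])]
  -- compute the derivative of G at x₀
  have hder : HasDerivAt G
      (((starRingEnd ℂ) (deriv E (x₀:ℂ)) * E (x₀:ℂ)
        - fsharp E (x₀:ℂ) * deriv E (x₀:ℂ)) / (E (x₀:ℂ)) ^ 2) (x₀:ℂ) := by
    have h1 : HasDerivAt (fsharp E) ((starRingEnd ℂ) (deriv E (x₀:ℂ))) (x₀:ℂ) := by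
      have := hasDerivAt_fsharp_s3 hEd (x₀:ℂ)
      rwa [Complex.conj_ofReal] at this
    exact h1.div (hEd _).hasDerivAt (hr x₀)
  have hnum : (starRingEnd ℂ) (deriv E (x₀:ℂ)) * E (x₀:ℂ)
      - fsharp E (x₀:ℂ) * deriv E (x₀:ℂ) = 0 := by
    have hfs : fsharp E (x₀:ℂ) = (starRingEnd ℂ) (E (x₀:ℂ)) := by
      simp [fsharp, Complex.conj_ofReal]
    rw [hfs]
    set u := E (x₀:ℂ)
    set v := deriv E (x₀:ℂ)
    have : (starRingEnd ℂ) v * u - (starRingEnd ℂ) u * v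
        = 2 * I * ((v.re * u.im - u.re * v.im : ℝ) : ℂ) := by
      apply Complex.ext <;>
        simp [Complex.mul_re, Complex.mul_im, Complex.sub_re, Complex.sub_im] <;> ring
    rw [this, hW]
    simp
  have : deriv G (x₀:ℂ) = 0 := by
    rw [hder.deriv, hnum, zero_div]
  exact boundary_deriv_ne_zero hGa habs hx this

/-- If `E = A + iB` is Hermite–Biehler and `A = (E+E^#)/2`, `B = (E−E^#)/(2i)` have no
common zeros, then all real zeros of `A` and of `B` are simple, and they strictly
interlace: between any two consecutive real zeros of `A` there is exactly one zero of
`B`, and vice versa. (On `ℝ`, `A = Re E` and `B = Im E`.) -/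
theorem hb_simple_interlacing (E : ℂ → ℂ) (hE : HermiteBiehler E)
    (hnc : ∀ z : ℂ, ¬((E z + fsharp E z) / 2 = 0 ∧
      (E z - fsharp E z) / (2 * Complex.I) = 0)) :
    (∀ x : ℝ, (E x).re = 0 → deriv (fun t : ℝ => (E t).re) x ≠ 0) ∧
    (∀ x : ℝ, (E x).im = 0 → deriv (fun t : ℝ => (E t).im) x ≠ 0) ∧
    (∀ x₁ x₂ : ℝ, x₁ < x₂ → (E x₁).re = 0 → (E x₂).re = 0 →
      (∀ y ∈ Set.Ioo x₁ x₂, (E y).re ≠ 0) →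
      ∃! y : ℝ, y ∈ Set.Ioo x₁ x₂ ∧ (E y).im = 0) ∧
    (∀ x₁ x₂ : ℝ, x₁ < x₂ → (E x₁).im = 0 → (E x₂).im = 0 →
      (∀ y ∈ Set.Ioo x₁ x₂, (E y).im ≠ 0) →
      ∃! y : ℝ, y ∈ Set.Ioo x₁ x₂ ∧ (E y).re = 0) := by
  have hEd := hE.1
  -- on the real axis, the functions A and B of the hypothesis are Re E and Im E
  have hfs : ∀ x : ℝ, fsharp E (x:ℂ) = (starRingEnd ℂ) (E (x:ℂ)) := by
    intro x; simp [fsharp, Complex.conj_ofReal]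
  have hAval : ∀ x : ℝ, (E (x:ℂ) + fsharp E (x:ℂ)) / 2 = (((E (x:ℂ)).re : ℝ) : ℂ) := by
    intro x
    rw [hfs x]
    apply Complex.ext <;> simp <;> ring
  have hBval : ∀ x : ℝ, (E (x:ℂ) - fsharp E (x:ℂ)) / (2 * Complex.I)
      = (((E (x:ℂ)).im : ℝ) : ℂ) := by
    intro x
    rw [hfs x]
    rw [div_eq_iff (by simp [Complex.I_ne_zero] : (2 : ℂ) * Complex.I ≠ 0)]
    apply Complex.ext <;> simp <;> ring
  have hnc' : ∀ x : ℝ, ¬((E (x:ℂ)).re = 0 ∧ (E (x:ℂ)).im = 0) := by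
    rintro x ⟨h1, h2⟩
    exact hnc (x:ℂ) ⟨by rw [hAval x, h1]; simp, by rw [hBval x, h2]; simp⟩
  have hr : ∀ x : ℝ, E (x:ℂ) ≠ 0 := by
    intro x h0
    exact hnc' x ⟨by rw [h0]; simp, by rw [h0]; simp⟩
  set A : ℝ → ℝ := fun t => (E (t:ℂ)).re with hA_def
  set B : ℝ → ℝ := fun t => (E (t:ℂ)).im with hB_def
  set A' : ℝ → ℝ := fun t => (deriv E (t:ℂ)).re with hA'_def
  set B' : ℝ → ℝ := fun t => (deriv E (t:ℂ)).im with hB'_def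
  have hA : ∀ x : ℝ, HasDerivAt A (A' x) x := fun x =>
    ((hEd (x:ℂ)).hasDerivAt).real_of_complex
  have hB : ∀ x : ℝ, HasDerivAt B (B' x) x := by
    intro x
    have h1 : HasDerivAt (fun z : ℂ => -Complex.I * E z)
        (-Complex.I * deriv E (x:ℂ)) (x:ℂ) := ((hEd (x:ℂ)).hasDerivAt).const_mul _
    have h2 := h1.real_of_complex
    have e1 : (fun x : ℝ => ((-Complex.I * E (x:ℂ))).re) = B := by
      funext t
      simp [hB_def, Complex.mul_re]
    have e2 : ((-Complex.I * deriv E (x:ℂ))).re = B' x := by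
      simp [hB'_def, Complex.mul_re]
    rw [e1, e2] at h2
    exact h2
  have hW : ∀ x : ℝ, A' x * B x - A x * B' x ≠ 0 := fun x => W_ne_zero hE hr x
  -- continuity of the Wronskian
  have hderC : Continuous (deriv E) := by
    have hEA : AnalyticOnNhd ℂ E univ := fun z _ => hEd.analyticAt z
    exact continuous_iff_continuousAt.mpr fun z => ((hEA.deriv) z trivial).continuousAt
  have hA'c : Continuous A' :=
    Complex.continuous_re.comp (hderC.comp Complex.continuous_ofReal)
  have hB'c : Continuous B' :=
    Complex.continuous_im.comp (hderC.comp Complex.continuous_ofReal)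
  have hAc : Continuous A := Differentiable.continuous fun x => (hA x).differentiableAt
  have hBc : Continuous B := Differentiable.continuous fun x => (hB x).differentiableAt
  have hWc : Continuous (fun x => A' x * B x - A x * B' x) :=
    ((hA'c.mul hBc).sub (hAc.mul hB'c))
  refine ⟨?_, ?_, ?_, ?_⟩
  · intro x hx h0
    rw [(hA x).deriv] at h0
    apply hW x
    have hx' : A x = 0 := hx
    rw [h0, hx']; ring
  · intro x hx h0
    rw [(hB x).deriv] at h0
    apply hW x
    have hx' : B x = 0 := hx
    rw [h0, hx']; ring
  · intro x₁ x₂ h12 h1 h2 hno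
    exact interlace_core hA hB hW hWc (fun x h => hnc' x ⟨h.1, h.2⟩) h12 h1 h2 hno
  · intro x₁ x₂ h12 h1 h2 hno
    have hW' : ∀ x : ℝ, B' x * A x - B x * A' x ≠ 0 := by
      intro x h0
      apply hW x
      linarith [h0]
    have hWc' : Continuous (fun x => B' x * A x - B x * A' x) :=
      ((hB'c.mul hAc).sub (hBc.mul hA'c))
    exact interlace_core hB hA hW' hWc' (fun x h => hnc' x ⟨h.2, h.1⟩) h12 h1 h2 hno
end
end

section
/- For every x > 0, Γ(x + 1/2) ≤ √x · Γ(x). -/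
/-- Gautschi-type inequality: `Γ(x + 1/2) ≤ √x · Γ(x)` for all `x > 0`. -/
theorem gamma_add_half_le (x : ℝ) (hx : 0 < x) :
    Real.Gamma (x + 1 / 2) ≤ Real.sqrt x * Real.Gamma x := by
  have hG : 0 < Real.Gamma x := Real.Gamma_pos_of_pos hx
  have hG1 : 0 < Real.Gamma (x + 1) := Real.Gamma_pos_of_pos (by linarith)
  have hc := Real.convexOn_log_Gamma.2 (Set.mem_Ioi.mpr hx)
    (Set.mem_Ioi.mpr (show (0:ℝ) < x + 1 by linarith))
    (by norm_num : (0:ℝ) ≤ (1:ℝ)/2) (by norm_num : (0:ℝ) ≤ (1:ℝ)/2) (by norm_num)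
  simp only [Function.comp_apply, smul_eq_mul] at hc
  have heq : (1/2 : ℝ) * x + 1/2 * (x + 1) = x + 1/2 := by ring
  rw [heq] at hc
  have h2 : Real.log (Real.Gamma (x + 1/2)) ≤
      Real.log (Real.sqrt x * Real.Gamma x) := by
    rw [Real.Gamma_add_one (ne_of_gt hx)] at hc
    rw [Real.log_mul (ne_of_gt (Real.sqrt_pos.mpr hx)) (ne_of_gt hG),
      Real.log_sqrt hx.le]
    rw [Real.log_mul (ne_of_gt hx) (ne_of_gt hG)] at hc
    linarith
  have := Real.exp_le_exp.mpr h2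
  rwa [Real.exp_log (Real.Gamma_pos_of_pos (by linarith)),
    Real.exp_log (mul_pos (Real.sqrt_pos.mpr hx) hG)] at this
end

section
/- Let E be Hermite–Biehler with no real zeros and phase φ with ‖φ'‖_∞ < ∞, and let 0 < p < ∞. For any α ∈ ℝ and any two consecutive simple real zeros a_l < a_r of A_α = Re(e^{iα}E) such that Arg(e^{iα}E(a_l)) = π/2 and Arg(e^{iα}E(a_r)) = −π/2, one has ∫_{a_l}^{a_r} |A_α(x)|^p / |E(x)|^p dx ≥ (2/‖φ'‖_∞) ∫_{−π/2}^{π/2} |cos t|^p dt. -/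
open Complex
open Filter Topology Asymptotics

noncomputable section

lemma fsharp_hasDerivAt {E : ℂ → ℂ} {e' : ℂ} (z : ℂ)
    (h : HasDerivAt E e' ((starRingEnd ℂ) z)) :
    HasDerivAt (fsharp E) ((starRingEnd ℂ) e') z := by
  rw [hasDerivAt_iff_isLittleO_nhds_zero] at h ⊢
  have hconj : Filter.Tendsto (fun h : ℂ => (starRingEnd ℂ) h) (𝓝 0) (𝓝 0) := by
    simpa using (Complex.continuous_conj.tendsto 0)
  have h2 := h.comp_tendsto hconj
  rw [Asymptotics.isLittleO_iff] at h2 ⊢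
  intro c hc
  filter_upwards [h2 hc] with x hx
  have key : fsharp E (z + x) - fsharp E z - x • (starRingEnd ℂ) e'
      = (starRingEnd ℂ) (E ((starRingEnd ℂ) z + (starRingEnd ℂ) x)
        - E ((starRingEnd ℂ) z) - (starRingEnd ℂ) x • e') := by
    simp only [fsharp, map_add, map_sub, smul_eq_mul, map_mul, Complex.conj_conj]
  rw [key, RCLike.norm_conj]
  simpa using hx

lemma fsharp_differentiable_s18 {E : ℂ → ℂ} (h : Differentiable ℂ E) :
    Differentiable ℂ (fsharp E) := fun z =>
  (fsharp_hasDerivAt z ((h _).hasDerivAt)).differentiableAt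

lemma phase_deriv_nonneg {E : ℂ → ℂ} (hE : HermiteBiehler E) (hEr : ∀ x : ℝ, E x ≠ 0)
    {φ : ℝ → ℝ} (hφ : Differentiable ℝ φ)
    (hphase : ∀ x : ℝ, fsharp E x / E x = Complex.exp (Complex.I * φ x)) (x₀ : ℝ) :
    0 ≤ deriv φ x₀ := by
  set B : ℂ → ℂ := fun z => fsharp E z / E z with hBdef
  have hBd : DifferentiableAt ℂ B (x₀ : ℂ) :=
    ((fsharp_differentiable_s18 hE.1) _).div (hE.1 _) (hEr x₀)
  set b' : ℂ := deriv B (x₀ : ℂ) with hb'def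
  have hB' : HasDerivAt B b' (x₀ : ℂ) := hBd.hasDerivAt
  -- identify b'
  set w : ℂ := Complex.exp (Complex.I * (φ x₀ : ℂ)) with hwdef
  have hb' : b' = w * (Complex.I * ((deriv φ x₀ : ℝ) : ℂ)) := by
    have hm : HasDerivAt (fun x : ℝ => B (x : ℂ)) b' x₀ := hB'.comp_ofReal
    have hfun : (fun x : ℝ => B (x : ℂ)) = fun x : ℝ => Complex.exp (Complex.I * (φ x : ℂ)) :=
      funext fun x => hphase x
    rw [hfun] at hm
    have h1 : HasDerivAt (fun x : ℝ => ((φ x : ℝ) : ℂ)) ((deriv φ x₀ : ℝ) : ℂ) x₀ :=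
      ((hφ x₀).hasDerivAt).ofReal_comp
    have h2 : HasDerivAt (fun x : ℝ => Complex.I * (φ x : ℂ)) (Complex.I * ((deriv φ x₀ : ℝ) : ℂ)) x₀ :=
      h1.const_mul Complex.I
    have hm2 := h2.cexp
    exact hm.unique hm2
  -- the vertical path
  set k : ℝ → ℂ := fun y => B ((x₀ : ℂ) + (y : ℂ) * Complex.I) with hkdef
  have hl : HasDerivAt (fun y : ℝ => (x₀ : ℂ) + (y : ℂ) * Complex.I) Complex.I 0 := by
    simpa using (((hasDerivAt_id (0 : ℝ)).ofReal_comp).mul_const Complex.I).const_add (x₀ : ℂ)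
  have hpt : (x₀ : ℂ) + ((0 : ℝ) : ℂ) * Complex.I = (x₀ : ℂ) := by simp
  have hB0 : HasDerivAt B b' ((fun y : ℝ => (x₀ : ℂ) + (y : ℂ) * Complex.I) 0) := by
    simpa [hpt] using hB'
  have hk : HasDerivAt k (Complex.I * b') 0 := by
    have := hB0.scomp (0 : ℝ) hl
    simp only [smul_eq_mul] at this; exact this
  have hk0 : k 0 = w := by
    simp only [hkdef, hpt, Complex.ofReal_zero, zero_mul, add_zero]
    exact hphase x₀
  -- real and imaginary parts
  have hkre : HasDerivAt (fun y : ℝ => (k y).re) (Complex.I * b').re 0 := by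
    have := (Complex.reCLM.hasFDerivAt.comp (0 : ℝ) hk.hasFDerivAt).hasDerivAt
    simp at this ⊢; exact this
  have hkim : HasDerivAt (fun y : ℝ => (k y).im) (Complex.I * b').im 0 := by
    have := (Complex.imCLM.hasFDerivAt.comp (0 : ℝ) hk.hasFDerivAt).hasDerivAt
    simp at this ⊢; exact this
  set d : ℝ := 2 * (k 0).re * (Complex.I * b').re + 2 * (k 0).im * (Complex.I * b').im with hddef
  have hg : HasDerivAt (fun y : ℝ => (k y).re ^ 2 + (k y).im ^ 2) d 0 := by
    have := (hkre.pow 2).add (hkim.pow 2)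
    exact this.congr_deriv (by rw [hddef]; ring)
  -- g y ≤ g 0 for y > 0
  have hnormw : Complex.normSq w = 1 := by
    rw [Complex.normSq_eq_norm_sq, Complex.norm_exp]
    simp
  have hg0 : (k 0).re ^ 2 + (k 0).im ^ 2 = 1 := by
    rw [hk0]
    have := hnormw
    rw [Complex.normSq_apply] at this
    nlinarith [this]
  have hle : ∀ y : ℝ, 0 < y → (k y).re ^ 2 + (k y).im ^ 2 ≤ 1 := by
    intro y hy
    have him : (0 : ℝ) < ((x₀ : ℂ) + (y : ℂ) * Complex.I).im := by simp [hy]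
    have h2 := hE.2 _ him
    have hEz : ‖E ((x₀ : ℂ) + (y : ℂ) * Complex.I)‖ ≠ 0 := by
      intro h0
      rw [h0] at h2
      exact absurd h2 (not_lt.mpr (norm_nonneg _))
    have habs : ‖k y‖
        = ‖E ((starRingEnd ℂ) ((x₀ : ℂ) + (y : ℂ) * Complex.I))‖
          / ‖E ((x₀ : ℂ) + (y : ℂ) * Complex.I)‖ := by
      simp [hkdef, hBdef, fsharp, map_div₀]
    have hlt1 : ‖k y‖ < 1 := by
      rw [habs, div_lt_one (lt_of_le_of_lt (norm_nonneg _) h2 |>.trans_le (le_refl _))]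
      · exact h2
    have : (k y).re ^ 2 + (k y).im ^ 2 = ‖k y‖ ^ 2 := by
      rw [← Complex.normSq_eq_norm_sq, Complex.normSq_apply]; ring
    rw [this]
    nlinarith [norm_nonneg (k y), hlt1]
  -- slope argument: d ≤ 0
  have hd_le : d ≤ 0 := by
    have hslope := hasDerivAt_iff_tendsto_slope.mp hg
    have hmono : 𝓝[Set.Ioi (0:ℝ)] 0 ≤ 𝓝[{(0:ℝ)}ᶜ] 0 :=
      nhdsWithin_mono 0 (fun y hy => ne_of_gt hy)
    have hslope' := hslope.mono_left hmono
    refine le_of_tendsto hslope' ?_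
    filter_upwards [self_mem_nhdsWithin] with y hy
    have hy' : (0:ℝ) < y := hy
    rw [slope_def_field]
    apply div_nonpos_of_nonpos_of_nonneg
    · have h1 := hle y hy'
      linarith [hg0]
    · linarith
  -- compute d
  have hwsq : w.re ^ 2 + w.im ^ 2 = 1 := by
    have := hnormw; rw [Complex.normSq_apply] at this; nlinarith [this]
  rw [hddef, hk0, hb'] at hd_le
  set c := deriv φ x₀
  have hre : (Complex.I * (w * (Complex.I * (c : ℂ)))).re = -(c * w.re) := by
    simp [Complex.mul_re, Complex.mul_im]
    ring
  have him2 : (Complex.I * (w * (Complex.I * (c : ℂ)))).im = -(c * w.im) := by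
    simp [Complex.mul_re, Complex.mul_im]
    ring
  rw [hre, him2] at hd_le
  nlinarith [hd_le, hwsq]

lemma exp_pi2_I : Complex.exp (((Real.pi/2 : ℝ) : ℂ) * Complex.I) = Complex.I := by
  rw [Complex.exp_mul_I, ← Complex.ofReal_cos, ← Complex.ofReal_sin,
    Real.cos_pi_div_two, Real.sin_pi_div_two]
  simp

lemma exp_neg_pi2_I : Complex.exp (((-(Real.pi/2) : ℝ) : ℂ) * Complex.I) = -Complex.I := by
  rw [Complex.exp_mul_I, ← Complex.ofReal_cos, ← Complex.ofReal_sin,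
    Real.cos_neg, Real.sin_neg, Real.cos_pi_div_two, Real.sin_pi_div_two]
  simp

/-- Lower bound for the `L^p` mass of `A_α/E` between two consecutive simple zeros
`a_l < a_r` of `A_α = Re(e^{iα}E)` with `Arg(e^{iα}E(a_l)) = π/2` and
`Arg(e^{iα}E(a_r)) = −π/2`:
`∫_{a_l}^{a_r} |A_α/E|^p ≥ (2/‖φ'‖_∞) ∫_{−π/2}^{π/2} |cos t|^p dt`. -/
theorem Aalpha_integral_lower_bound (E : ℂ → ℂ) (hE : HermiteBiehler E)
    (hEr : ∀ x : ℝ, E x ≠ 0)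
    (φ : ℝ → ℝ) (hφ : Differentiable ℝ φ)
    (hphase : ∀ x : ℝ, fsharp E x / E x = Complex.exp (Complex.I * φ x))
    (M : ℝ) (hM : 0 < M) (hM' : ∀ x : ℝ, deriv φ x ≤ M)
    (p : ℝ) (hp : 0 < p) (α al ar : ℝ) (hlr : al < ar)
    (hzl : (Complex.exp (Complex.I * α) * E al).re = 0)
    (hzr : (Complex.exp (Complex.I * α) * E ar).re = 0)
    (hsl : deriv (fun x : ℝ => (Complex.exp (Complex.I * α) * E x).re) al ≠ 0)
    (hsr : deriv (fun x : ℝ => (Complex.exp (Complex.I * α) * E x).re) ar ≠ 0)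
    (hcons : ∀ x ∈ Set.Ioo al ar, (Complex.exp (Complex.I * α) * E x).re ≠ 0)
    (hargl : Complex.arg (Complex.exp (Complex.I * α) * E al) = Real.pi / 2)
    (hargr : Complex.arg (Complex.exp (Complex.I * α) * E ar) = -(Real.pi / 2)) :
    (2 / M) * ∫ t in (-(Real.pi / 2))..(Real.pi / 2), |Real.cos t| ^ p
      ≤ ∫ x in al..ar,
          |(Complex.exp (Complex.I * α) * E x).re| ^ p / ‖E x‖ ^ p := by
  have hder : ∀ x : ℝ, 0 ≤ deriv φ x := phase_deriv_nonneg hE hEr hφ hphase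
  set ψ : ℝ → ℝ := fun x => (φ x - φ al) / 2 - Real.pi / 2 with hψdef
  have hψal : ψ al = -(Real.pi / 2) := by simp [hψdef]
  have hψderiv : ∀ x, HasDerivAt ψ (deriv φ x / 2) x := fun x => by
    exact (((hφ x).hasDerivAt.sub_const (φ al)).div_const 2).sub_const (Real.pi/2)
  have hψdiff : Differentiable ℝ ψ := fun x => (hψderiv x).differentiableAt
  have hψcont : Continuous ψ := hψdiff.continuous
  have hψmono : Monotone ψ := monotone_of_deriv_nonneg hψdiff (fun x => by
    rw [(hψderiv x).deriv]; linarith [hder x])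
  have habspos : ∀ x : ℝ, 0 < ‖E x‖ := fun x =>
    norm_pos_iff.mpr (hEr x)
  have habsne : ∀ x : ℝ, ((‖E x‖ : ℝ) : ℂ) ≠ 0 := fun x => by
    exact_mod_cast (habspos x).ne'
  have hconjE : ∀ x : ℝ, (starRingEnd ℂ) (E x) = Complex.exp (Complex.I * φ x) * E x := by
    intro x
    have h := hphase x
    rw [div_eq_iff (hEr x)] at h
    simpa [fsharp, Complex.conj_ofReal] using h
  -- the unit function v
  set v : ℝ → ℂ := fun x =>
    Complex.exp (Complex.I * α) * E x * Complex.exp (Complex.I * ψ x)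
      / ((‖E x‖ : ℝ) : ℂ) with hvdef
  have hsq : ∀ x : ℝ, v x ^ 2 = Complex.exp (Complex.I * (2*α - φ al - Real.pi)) := by
    intro x
    have hden : (((‖E x‖ : ℝ) : ℂ)) ^ 2 = E x * (starRingEnd ℂ) (E x) := by
      rw [Complex.mul_conj]
      norm_cast
      exact Complex.sq_norm _
    rw [hvdef]
    simp only
    rw [div_pow, hden, hconjE x]
    rw [div_eq_iff (by
      exact mul_ne_zero (hEr x) (mul_ne_zero (Complex.exp_ne_zero _) (hEr x)))]
    have hexp : Complex.exp (Complex.I * (α:ℂ)) ^ 2 * Complex.exp (Complex.I * ((ψ x : ℝ):ℂ)) ^ 2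
        = Complex.exp (Complex.I * (2*(α:ℂ) - ((φ al : ℝ):ℂ) - (Real.pi:ℂ)))
          * Complex.exp (Complex.I * ((φ x : ℝ):ℂ)) := by
      rw [← Complex.exp_nat_mul, ← Complex.exp_nat_mul, ← Complex.exp_add, ← Complex.exp_add]
      congr 1
      push_cast [hψdef]
      ring
    linear_combination (E (x:ℂ)) ^ 2 * hexp
  have hEal : Complex.exp (Complex.I * α) * E al
      = ((‖E al‖ : ℝ) : ℂ) * Complex.I := by
    have h := Complex.norm_mul_exp_arg_mul_I (Complex.exp (Complex.I * α) * E al)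
    rw [hargl] at h
    have habs : ‖Complex.exp (Complex.I * α) * E al‖ = ‖E al‖ := by
      rw [norm_mul, Complex.norm_exp]
      simp
    rw [habs] at h
    rw [← h, exp_pi2_I]
  have hEar : Complex.exp (Complex.I * α) * E ar
      = ((‖E ar‖ : ℝ) : ℂ) * (-Complex.I) := by
    have h := Complex.norm_mul_exp_arg_mul_I (Complex.exp (Complex.I * α) * E ar)
    rw [hargr] at h
    have habs : ‖Complex.exp (Complex.I * α) * E ar‖ = ‖E ar‖ := by
      rw [norm_mul, Complex.norm_exp]
      simp
    rw [habs] at h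
    rw [← h, ← exp_neg_pi2_I]
  have hval : v al = 1 := by
    rw [hvdef]
    simp only
    rw [hEal, hψal]
    rw [show Complex.I * ((-(Real.pi/2) : ℝ) : ℂ) = ((-(Real.pi/2) : ℝ) : ℂ) * Complex.I from
      mul_comm _ _, exp_neg_pi2_I]
    have h1 : ((‖E al‖ : ℝ) : ℂ) * Complex.I * -Complex.I
        = ((‖E al‖ : ℝ) : ℂ) := by
      rw [mul_assoc]
      simp [Complex.I_mul_I]
    rw [h1, div_self (habsne al)]
  -- v is identically 1
  have hvcont : Continuous v := by
    apply Continuous.div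
    · exact ((continuous_const.mul (hE.1.continuous.comp Complex.continuous_ofReal)).mul
        (Complex.continuous_exp.comp (continuous_const.mul
          (Complex.continuous_ofReal.comp hψcont))))
    · exact Complex.continuous_ofReal.comp
        (continuous_norm.comp (hE.1.continuous.comp Complex.continuous_ofReal))
    · exact fun x => habsne x
  have hpm : ∀ x : ℝ, v x = 1 ∨ v x = -1 := by
    intro x
    have h2 : v x ^ 2 = 1 := by rw [hsq x, ← hsq al, hval]; norm_num
    have h3 : (v x - 1) * (v x + 1) = 0 := by linear_combination h2
    rcases mul_eq_zero.mp h3 with h | h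
    · exact Or.inl (sub_eq_zero.mp h)
    · exact Or.inr (eq_neg_of_add_eq_zero_left h)
  have hvone : ∀ x : ℝ, v x = 1 := by
    intro x
    by_contra hne
    have hxm : v x = -1 := (hpm x).resolve_left hne
    have hrecont : Continuous fun y : ℝ => (v y).re := Complex.continuous_re.comp hvcont
    have h0mem : (0:ℝ) ∈ Set.uIcc ((fun y => (v y).re) al) ((fun y => (v y).re) x) := by
      simp only [hval, hxm]
      rw [Set.mem_uIcc]
      norm_num
    obtain ⟨y, -, hy⟩ := intermediate_value_uIcc (hrecont.continuousOn (s := Set.uIcc al x)) h0mem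
    rcases hpm y with h | h <;> simp [h] at hy
  have hv : ∀ x : ℝ, Complex.exp (Complex.I * α) * E x
      = ((‖E x‖ : ℝ) : ℂ) * Complex.exp (-(Complex.I * ψ x)) := by
    intro x
    have h := hvone x
    rw [hvdef] at h
    simp only at h
    rw [div_eq_one_iff_eq (habsne x)] at h
    calc Complex.exp (Complex.I * α) * E x
        = Complex.exp (Complex.I * α) * E x * Complex.exp (Complex.I * ψ x)
          * Complex.exp (-(Complex.I * ψ x)) := by
          rw [mul_assoc, ← Complex.exp_add]
          simp
      _ = ((‖E x‖ : ℝ) : ℂ) * Complex.exp (-(Complex.I * ψ x)) := by rw [h]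
  have hre2 : ∀ x : ℝ, (Complex.exp (Complex.I * α) * E x).re
      = ‖E x‖ * Real.cos (ψ x) := by
    intro x
    rw [hv x]
    rw [show -(Complex.I * ((ψ x : ℝ):ℂ)) = ((-(ψ x) : ℝ) : ℂ) * Complex.I from by
      push_cast; ring]
    rw [Complex.re_ofReal_mul, Complex.exp_ofReal_mul_I_re, Real.cos_neg]
  have hcosne : ∀ x ∈ Set.Ioo al ar, Real.cos (ψ x) ≠ 0 := by
    intro x hx hc
    exact hcons x hx (by rw [hre2 x, hc, mul_zero])
  have hπ := Real.pi_pos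
  -- ψ ar = π/2
  have hψar : ψ ar = Real.pi / 2 := by
    have h1 := hv ar
    rw [hEar] at h1
    have h2 : Complex.exp (-(Complex.I * ((ψ ar : ℝ):ℂ))) = -Complex.I :=
      (mul_left_cancel₀ (habsne ar) h1).symm
    rw [← exp_neg_pi2_I] at h2
    obtain ⟨n, hn⟩ := Complex.exp_eq_exp_iff_exists_int.mp h2
    have him := congrArg Complex.im hn
    simp [Complex.ext_iff] at him
    have hψareq : ψ ar = Real.pi/2 - 2*Real.pi*n := by linarith [him]
    have hle : ψ al ≤ ψ ar := hψmono hlr.le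
    rw [hψal] at hle
    have hn_le : (n:ℝ) ≤ 0 := by
      by_contra hc
      push_neg at hc
      have h0 : (0:ℤ) < n := by exact_mod_cast hc
      have h1' : (1:ℝ) ≤ (n:ℝ) := by exact_mod_cast h0
      rw [hψareq] at hle
      nlinarith
    have hn_ge : (0:ℝ) ≤ (n:ℝ) := by
      by_contra hc
      push_neg at hc
      have h1 : n ≤ -1 := by
        have : n < 0 := by exact_mod_cast hc
        omega
      have h1' : (n:ℝ) ≤ -1 := by exact_mod_cast h1
      have hgt : Real.pi / 2 < ψ ar := by rw [hψareq]; nlinarith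
      have hmem : Real.pi/2 ∈ Set.Ioo (ψ al) (ψ ar) := by
        rw [hψal]
        constructor <;> nlinarith
      obtain ⟨y, hy, hyv⟩ := intermediate_value_Ioo hlr.le hψcont.continuousOn hmem
      exact hcosne y hy (by rw [hyv]; exact Real.cos_pi_div_two)
    have hn0 : (n:ℝ) = 0 := le_antisymm hn_le hn_ge
    rw [hψareq, hn0]
    ring
  -- integral part
  have hC : Continuous (fun t : ℝ => |Real.cos t| ^ p) :=
    (continuous_abs.comp Real.continuous_cos).rpow_const (fun x => Or.inr hp.le)
  set F : ℝ → ℝ := fun t => ∫ s in (-(Real.pi/2))..t, |Real.cos s| ^ p with hFdef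
  have hF : ∀ t : ℝ, HasDerivAt F (|Real.cos t| ^ p) t := fun t =>
    (hC.integral_hasStrictDerivAt (-(Real.pi/2)) t).hasDerivAt
  set f' : ℝ → ℝ := fun x => |Real.cos (ψ x)| ^ p * (deriv φ x / 2) with hf'def
  have hG : ∀ x : ℝ, HasDerivAt (F ∘ ψ) (f' x) x := fun x =>
    (hF (ψ x)).comp x (hψderiv x)
  have hbound : ∀ x : ℝ, |Real.cos (ψ x)| ^ p ≤ 1 := fun x =>
    Real.rpow_le_one (abs_nonneg _) (Real.abs_cos_le_one _) hp.le
  have hrpnn : ∀ x : ℝ, 0 ≤ |Real.cos (ψ x)| ^ p := fun x =>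
    Real.rpow_nonneg (abs_nonneg _) _
  have hint : IntervalIntegrable f' MeasureTheory.volume al ar := by
    rw [intervalIntegrable_iff]
    apply MeasureTheory.Measure.integrableOn_of_bounded (M := M/2)
    · exact measure_Ioc_lt_top.ne
    · exact (((hC.comp hψcont).measurable).mul
        ((measurable_deriv φ).div_const 2)).aestronglyMeasurable
    · apply MeasureTheory.ae_of_all
      intro x
      rw [Real.norm_eq_abs, hf'def]
      simp only
      rw [abs_mul, _root_.abs_of_nonneg (hrpnn x), _root_.abs_of_nonneg (by linarith [hder x] :
        (0:ℝ) ≤ deriv φ x / 2)]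
      calc |Real.cos (ψ x)| ^ p * (deriv φ x / 2) ≤ 1 * (M/2) := by
            apply mul_le_mul (hbound x) (by linarith [hM' x]) (by linarith [hder x]) one_pos.le
        _ = M/2 := one_mul _
  have hFTC : ∫ x in al..ar, f' x = F (Real.pi/2) := by
    rw [intervalIntegral.integral_eq_sub_of_hasDerivAt (fun x _ => hG x) hint]
    show F (ψ ar) - F (ψ al) = _
    rw [hψar, hψal]
    have hF0 : F (-(Real.pi/2)) = 0 := intervalIntegral.integral_same
    rw [hF0, sub_zero]
  have hint2 : IntervalIntegrable (fun x => |Real.cos (ψ x)| ^ p) MeasureTheory.volume al ar :=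
    (hC.comp hψcont).intervalIntegrable al ar
  have hmono2 : ∫ x in al..ar, (2/M) * f' x ≤ ∫ x in al..ar, |Real.cos (ψ x)| ^ p := by
    apply intervalIntegral.integral_mono_on hlr.le (hint.const_mul (2/M)) hint2
    intro x hx
    rw [hf'def]
    simp only
    have h1 : (2/M) * (|Real.cos (ψ x)| ^ p * (deriv φ x / 2))
        = |Real.cos (ψ x)| ^ p * (deriv φ x / M) := by
      field_simp
    rw [h1]
    calc |Real.cos (ψ x)| ^ p * (deriv φ x / M) ≤ |Real.cos (ψ x)| ^ p * 1 := by
          apply mul_le_mul_of_nonneg_left _ (hrpnn x)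
          rw [div_le_one hM]
          exact hM' x
      _ = |Real.cos (ψ x)| ^ p := mul_one _
  have hinteq : ∀ x : ℝ, |(Complex.exp (Complex.I * α) * E x).re| ^ p / ‖E x‖ ^ p
      = |Real.cos (ψ x)| ^ p := by
    intro x
    rw [hre2 x, abs_mul, _root_.abs_of_nonneg (norm_nonneg _),
      Real.mul_rpow (norm_nonneg _) (abs_nonneg _), mul_comm, mul_div_assoc,
      div_self (ne_of_gt (Real.rpow_pos_of_pos (habspos x) p)), mul_one]
  calc (2 / M) * ∫ t in (-(Real.pi / 2))..(Real.pi / 2), |Real.cos t| ^ p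
      = (2/M) * ∫ x in al..ar, f' x := by rw [hFTC]
    _ = ∫ x in al..ar, (2/M) * f' x := (intervalIntegral.integral_const_mul _ _).symm
    _ ≤ ∫ x in al..ar, |Real.cos (ψ x)| ^ p := hmono2
    _ = ∫ x in al..ar, |(Complex.exp (Complex.I * α) * E x).re| ^ p / ‖E x‖ ^ p := by
        simp only [hinteq]
end
end
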